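/- arXiv:2509.25170 — 5 statements merged into one kernel-verified Lean document; each statement's English description precedes it below -/
import Mathlib

section
/- Let α, σ be schedulers and let 0 < t < t' < 1, so that α_t, α_{t'}, σ_t, σ_{t'} > 0, and assume σ_t² > (α_t/α_{t'})² σ_{t'}². Set ρ = (α_t σ_{t'})/(σ_t α_{t'}) and Σ = [[σ_t², ρ σ_t σ_{t'}], [ρ σ_t σ_{t'}, σ_{t'}²]]. Then Σ is positive definite and for every d ≥ 1 and all z, x_t, x_{t'} ∈ ℝ^d one has ∏_{j=1}^d N₂((x_t^j, x_{t'}^j); z^j (α_t, α_{t'})ᵀ, Σ) = ∏_{j=1}^d N(x_{t'}^j; α_{t'} z^j, σ_{t'}²) · N(x_t^j; (α_t/α_{t'}) x_{t'}^j, σ_t² − (α_t/α_{t'})² σ_{t'}²). Consequently, for any probability density p_data on ℝ^d, the GLASS joint conditional density with correlation ρ = (α_t σ_{t'})/(σ_t α_{t'}) equals the DDPM joint conditional density obtained by sampling X_{t'} from ∏_j N(·; α_{t'} z^j, σ_{t'}²) and then X_t from the forward-process backward kernel ∏_j N(·; (α_t/α_{t'}) X_{t'}^j, σ_t² − (α_t/α_{t'})²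 σ_{t'}²). -/
open MeasureTheory Real Matrix
open scoped BigOperators

noncomputable def gauss1 (y m v : ℝ) : ℝ :=
  (2 * Real.pi * v) ^ (-(1:ℝ)/2) * Real.exp (-(y - m)^2 / (2 * v))

noncomputable def gauss2 (x m : Fin 2 → ℝ) (S : Matrix (Fin 2) (Fin 2) ℝ) : ℝ :=
  (2 * Real.pi)⁻¹ * S.det ^ (-(1:ℝ)/2) *
    Real.exp (-(1/2) * ((x - m) ⬝ᵥ (S⁻¹ *ᵥ (x - m))))

noncomputable def suffStat (μ : Fin 2 → ℝ) (S : Matrix (Fin 2) (Fin 2) ℝ)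
    (x : Fin 2 → ℝ) : ℝ :=
  (μ ⬝ᵥ (S⁻¹ *ᵥ x)) / (μ ⬝ᵥ (S⁻¹ *ᵥ μ))

structure IsScheduler (α σ : ℝ → ℝ) : Prop where
  contDiff_a : ContDiffOn ℝ 1 α (Set.Icc 0 1)
  contDiff_s : ContDiffOn ℝ 1 σ (Set.Icc 0 1)
  a0 : α 0 = 0
  a1 : α 1 = 1
  s0 : σ 0 = 1
  s1 : σ 1 = 0
  mono_a : StrictMonoOn α (Set.Icc 0 1)
  anti_s : StrictAntiOn σ (Set.Icc 0 1)

def IsProbDensity {d : ℕ} (p : (Fin d → ℝ) → ℝ) : Prop :=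
  Measurable p ∧ (∀ z, 0 ≤ p z) ∧ (∫ z, p z) = 1

noncomputable def marginal {d : ℕ} (α σ : ℝ → ℝ) (p : (Fin d → ℝ) → ℝ)
    (t : ℝ) (x : Fin d → ℝ) : ℝ :=
  ∫ z, (∏ j, gauss1 (x j) (α t * z j) ((σ t)^2)) * p z

noncomputable def post {d : ℕ} (α σ : ℝ → ℝ) (p : (Fin d → ℝ) → ℝ)
    (t : ℝ) (z x : Fin d → ℝ) : ℝ :=
  (∏ j, gauss1 (x j) (α t * z j) ((σ t)^2)) * p z / marginal α σ p t x

noncomputable def denoiser {d : ℕ} (α σ : ℝ → ℝ) (p : (Fin d → ℝ) → ℝ)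
    (t : ℝ) (x : Fin d → ℝ) : Fin d → ℝ :=
  ∫ z, post α σ p t z x • z

noncomputable def glassLik {d : ℕ} (μ : Fin 2 → ℝ) (S : Matrix (Fin 2) (Fin 2) ℝ)
    (x1 x2 z : Fin d → ℝ) : ℝ :=
  ∏ j, gauss2 ![x1 j, x2 j] (z j • μ) S

noncomputable def glassZ {d : ℕ} (μ : Fin 2 → ℝ) (S : Matrix (Fin 2) (Fin 2) ℝ)
    (p : (Fin d → ℝ) → ℝ) (x1 x2 : Fin d → ℝ) : ℝ :=
  ∫ w, glassLik μ S x1 x2 w * p w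

noncomputable def glassPost {d : ℕ} (μ : Fin 2 → ℝ) (S : Matrix (Fin 2) (Fin 2) ℝ)
    (p : (Fin d → ℝ) → ℝ) (x1 x2 z : Fin d → ℝ) : ℝ :=
  glassLik μ S x1 x2 z * p z / glassZ μ S p x1 x2

noncomputable def glassDenoiser {d : ℕ} (μ : Fin 2 → ℝ) (S : Matrix (Fin 2) (Fin 2) ℝ)
    (p : (Fin d → ℝ) → ℝ) (x1 x2 : Fin d → ℝ) : Fin d → ℝ :=
  ∫ z, glassPost μ S p x1 x2 z • z


theorem glass_prefac (u v : ℝ) (hu : 0 < u) (hv : 0 < v) :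
    (2*π)⁻¹ * (u*v) ^ (-(1:ℝ)/2) = (2*π*u)^(-(1:ℝ)/2) * (2*π*v)^(-(1:ℝ)/2) := by
  have hc : (0:ℝ) < 2*π := by positivity
  rw [show (2*π*u) = (2*π)*u by ring, show (2*π*v) = (2*π)*v by ring]
  set c := 2*π with hcdef
  rw [Real.mul_rpow hc.le hu.le, Real.mul_rpow hc.le hv.le,
    Real.mul_rpow hu.le hv.le]
  have h2 : c ^ (-(1:ℝ)/2) * c ^ (-(1:ℝ)/2) = c⁻¹ := by
    rw [← Real.rpow_add hc, ← Real.rpow_neg_one c]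
    norm_num
  calc c⁻¹ * (u ^ (-(1:ℝ)/2) * v ^ (-(1:ℝ)/2))
      = (c ^ (-(1:ℝ)/2) * c ^ (-(1:ℝ)/2)) * (u ^ (-(1:ℝ)/2) * v ^ (-(1:ℝ)/2)) := by rw [h2]
    _ = _ := by ring

theorem glass_key (a b s u c x1 x2 : ℝ) (hb : 0 < b) (hs : 0 < s) (hu : 0 < u)
    (hv : (a/b)^2 * u^2 < s^2) :
    gauss2 ![x1, x2] (c • ![a, b]) !![s^2, (a*u/(s*b))*s*u; (a*u/(s*b))*s*u, u^2]
      = gauss1 x2 (b*c) (u^2) * gauss1 x1 ((a/b)*x2) (s^2 - (a/b)^2*u^2) := by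
  have hM : (!![s^2, (a*u/(s*b))*s*u; (a*u/(s*b))*s*u, u^2] : Matrix (Fin 2) (Fin 2) ℝ)
      = !![s^2, a*u^2/b; a*u^2/b, u^2] := by
    have : (a*u/(s*b))*s*u = a*u^2/b := by field_simp
    rw [this]
  rw [hM]
  set v := s^2 - (a/b)^2*u^2 with hvdef
  have hv0 : 0 < v := by simp [hvdef]; linarith
  have hdet : s ^ 2 * u ^ 2 - a * u ^ 2 / b * (a * u ^ 2 / b) = u^2 * v := by
    simp only [hvdef]; field_simp
  simp only [gauss2, gauss1, Matrix.inv_def, Matrix.adjugate_fin_two_of,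
    Matrix.det_fin_two_of, Ring.inverse_eq_inv', Matrix.mulVec, dotProduct,
    Fin.sum_univ_two, Matrix.smul_apply, Pi.sub_apply, Pi.smul_apply, smul_eq_mul,
    Matrix.cons_val_zero, Matrix.cons_val_one, Matrix.head_cons, Matrix.cons_val',
    Matrix.empty_val', Matrix.cons_val_fin_one, Matrix.head_fin_const, Matrix.of_apply]
  rw [hdet, glass_prefac (u^2) v (by positivity) hv0]
  rw [show (2*π*u^2)^(-(1:ℝ)/2) * rexp (-(x2 - b*c)^2 / (2*u^2)) *
      ((2*π*v)^(-(1:ℝ)/2) * rexp (-(x1 - a/b*x2)^2 / (2*v)))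
      = (2*π*u^2)^(-(1:ℝ)/2) * (2*π*v)^(-(1:ℝ)/2) *
        (rexp (-(x2 - b*c)^2 / (2*u^2)) * rexp (-(x1 - a/b*x2)^2 / (2*v))) by ring,
    ← Real.exp_add]
  congr 1
  have hs2 : s^2 = v + (a/b)^2*u^2 := by rw [hvdef]; ring
  rw [hs2]
  field_simp
  ring

theorem glass_posdef (a b s u : ℝ) (hb : 0 < b) (hs : 0 < s) (hu : 0 < u)
    (hv : (a/b)^2 * u^2 < s^2) :
    (!![s^2, (a*u/(s*b))*s*u; (a*u/(s*b))*s*u, u^2] : Matrix (Fin 2) (Fin 2) ℝ).PosDef := by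
  have hr : (a*u/(s*b))*s*u = a*u^2/b := by field_simp
  rw [hr]
  rw [Matrix.posDef_iff_dotProduct_mulVec]
  constructor
  · ext i j
    fin_cases i <;> fin_cases j <;>
      simp [Matrix.conjTranspose, Matrix.vecHead, Matrix.vecTail]
  · intro x hx
    have hcases : x 0 ≠ 0 ∨ x 1 ≠ 0 := by
      by_contra h
      push_neg at h
      exact hx (funext fun i => by fin_cases i <;> simp [h.1, h.2])
    simp only [Matrix.mulVec, dotProduct, Fin.sum_univ_two, Matrix.cons_val_zero,
      Matrix.cons_val_one, Matrix.head_cons, Matrix.of_apply, Matrix.cons_val',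
      Matrix.empty_val', Matrix.cons_val_fin_one, Matrix.head_fin_const,
      star_trivial]
    have hdet : 0 < s^2*u^2 - (a*u^2/b)*(a*u^2/b) := by
      have : s^2*u^2 - (a*u^2/b)*(a*u^2/b) = (s^2 - (a/b)^2*u^2) * u^2 := by
        field_simp
      rw [this]; exact mul_pos (by linarith) (by positivity)
    rcases hcases with h0 | h1
    · nlinarith [sq_nonneg (u^2 * x 1 + (a*u^2/b) * x 0), sq_pos_of_ne_zero h0,
        sq_nonneg (x 1)]
    · nlinarith [sq_nonneg (s^2 * x 0 + (a*u^2/b) * x 1), sq_pos_of_ne_zero h1]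

theorem stmt0 (α σ : ℝ → ℝ) (hsch : IsScheduler α σ) (t t' : ℝ)
    (ht : 0 < t) (htt' : t < t') (ht'1 : t' < 1)
    (hvar : (α t / α t')^2 * (σ t')^2 < (σ t)^2)
    (ρ : ℝ) (hρ : ρ = (α t * σ t') / (σ t * α t'))
    (Sm : Matrix (Fin 2) (Fin 2) ℝ)
    (hSm : Sm = !![(σ t)^2, ρ * (σ t) * (σ t'); ρ * (σ t) * (σ t'), (σ t')^2]) :
    Sm.PosDef ∧
    (∀ d : ℕ, 1 ≤ d → ∀ z xt xt' : Fin d → ℝ,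
      (∏ j, gauss2 ![xt j, xt' j] (z j • ![α t, α t']) Sm)
        = ∏ j, gauss1 (xt' j) (α t' * z j) ((σ t')^2) *
            gauss1 (xt j) ((α t / α t') * xt' j)
              ((σ t)^2 - (α t / α t')^2 * (σ t')^2)) ∧
    (∀ d : ℕ, 1 ≤ d → ∀ p : (Fin d → ℝ) → ℝ, IsProbDensity p →
      ∀ z xt xt' : Fin d → ℝ,
      (∏ j, gauss2 ![xt j, xt' j] (z j • ![α t, α t']) Sm) * p z
        = (∏ j, gauss1 (xt' j) (α t' * z j) ((σ t')^2) *
            gauss1 (xt j) ((α t / α t') * xt' j)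
              ((σ t)^2 - (α t / α t')^2 * (σ t')^2)) * p z) := by
  subst hρ hSm
  have h0m : (0:ℝ) ∈ Set.Icc (0:ℝ) 1 := ⟨le_refl 0, zero_le_one⟩
  have h1m : (1:ℝ) ∈ Set.Icc (0:ℝ) 1 := ⟨zero_le_one, le_refl 1⟩
  have htm : t ∈ Set.Icc (0:ℝ) 1 := ⟨ht.le, by linarith⟩
  have ht'm : t' ∈ Set.Icc (0:ℝ) 1 := ⟨by linarith, ht'1.le⟩
  have hb : 0 < α t' := by
    have := hsch.mono_a h0m ht'm (by linarith)
    rwa [hsch.a0] at this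
  have hs : 0 < σ t := by
    have := hsch.anti_s htm h1m (by linarith)
    rwa [hsch.s1] at this
  have hu : 0 < σ t' := by
    have := hsch.anti_s ht'm h1m (by linarith)
    rwa [hsch.s1] at this
  have hprod : ∀ d : ℕ, 1 ≤ d → ∀ z xt xt' : Fin d → ℝ,
      (∏ j, gauss2 ![xt j, xt' j] (z j • ![α t, α t'])
        !![(σ t)^2, (α t * σ t') / (σ t * α t') * (σ t) * (σ t');
           (α t * σ t') / (σ t * α t') * (σ t) * (σ t'), (σ t')^2])
        = ∏ j, gauss1 (xt' j) (α t' * z j) ((σ t')^2) *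
            gauss1 (xt j) ((α t / α t') * xt' j)
              ((σ t)^2 - (α t / α t')^2 * (σ t')^2) := by
    intro d _ z xt xt'
    refine Finset.prod_congr rfl fun j _ => ?_
    have h := glass_key (α t) (α t') (σ t) (σ t') (z j) (xt j) (xt' j) hb hs hu hvar
    exact h
  exact ⟨glass_posdef (α t) (α t') (σ t) (σ t') hb hs hu hvar, hprod,
    fun d hd p _ z xt xt' => by rw [hprod d hd z xt xt']⟩
end

section
/- Let α, σ be schedulers, let p_data be a probability density on ℝ^d with compact support, let μ ∈ ℝ² be nonzero and Σ ∈ ℝ^{2×2} positive definite, and suppose there exists t* ∈ (0,1) with g(t*) = σ_{t*}²/α_{t*}² = (μᵀΣ⁻¹μ)⁻¹. Then for every x = (x₁, x₂) with x₁, x₂ ∈ ℝ^d such that the GLASS posterior normalizing integral is positive, one has D_{μ,Σ}(x₁, x₂) = D_{t*}(α_{t*} S(x)), where S(x) ∈ ℝ^d is defined coordinatewise by S(x)^j = (μᵀΣ⁻¹(x₁^j, x₂^j)ᵀ)/(μᵀΣ⁻¹μ). -/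
open MeasureTheory Real Matrix
open scoped BigOperators

lemma key (S : Matrix (Fin 2) (Fin 2) ℝ) (hsym : S⁻¹ 0 1 = S⁻¹ 1 0) (μ : Fin 2 → ℝ)
    (hc : 0 < μ ⬝ᵥ (S⁻¹ *ᵥ μ))
    (a : ℝ) (s2 : ℝ) (hs2 : 0 < s2)
    (hg : a^2 = s2 * (μ ⬝ᵥ (S⁻¹ *ᵥ μ)))
    (x : Fin 2 → ℝ) (z : ℝ) :
    gauss2 x (z • μ) S =
      ((2 * Real.pi)⁻¹ * S.det ^ (-(1:ℝ)/2) *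
        Real.exp (-(1/2) * (x ⬝ᵥ (S⁻¹ *ᵥ x) - (μ ⬝ᵥ (S⁻¹ *ᵥ x))^2 / (μ ⬝ᵥ (S⁻¹ *ᵥ μ))))
        * (2 * Real.pi * s2) ^ ((1:ℝ)/2)) *
      gauss1 (a * suffStat μ S x) (a * z) s2 := by
  set A := S⁻¹ with hA
  set c := μ ⬝ᵥ (A *ᵥ μ) with hcdef
  set b := μ ⬝ᵥ (A *ᵥ x) with hbdef
  have hcne : c ≠ 0 := ne_of_gt hc
  have hs2ne : s2 ≠ 0 := ne_of_gt hs2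
  have h2pi : (0:ℝ) < 2 * Real.pi * s2 := by positivity
  have hquad : (x - z • μ) ⬝ᵥ (A *ᵥ (x - z • μ))
      = x ⬝ᵥ (A *ᵥ x) - 2 * z * b + z^2 * c := by
    simp only [hbdef, hcdef, dotProduct, Matrix.mulVec, Fin.sum_univ_two,
      Pi.sub_apply, Pi.smul_apply, smul_eq_mul]
    linear_combination (z * (μ 0 * x 1 - μ 1 * x 0)) * hsym
  have hsq : (a * (b / c) - a * z)^2 = s2 * c * (b / c - z)^2 := by
    rw [show a * (b / c) - a * z = a * (b / c - z) by ring, mul_pow, hg]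
  unfold gauss2 gauss1 suffStat
  rw [hquad]
  have hcancel : (2 * Real.pi * s2) ^ ((1:ℝ)/2) * (2 * Real.pi * s2) ^ (-(1:ℝ)/2) = 1 := by
    rw [← Real.rpow_add h2pi]
    norm_num
  have hexp : Real.exp (-(1/2) * (x ⬝ᵥ (A *ᵥ x) - 2 * z * b + z^2 * c))
      = Real.exp (-(1/2) * (x ⬝ᵥ (A *ᵥ x) - b^2 / c))
        * Real.exp (-(a * (b / c) - a * z)^2 / (2 * s2)) := by
    rw [← Real.exp_add]
    congr 1
    rw [hsq]
    field_simp
    ring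
  rw [hexp]
  linear_combination (-((2 * Real.pi)⁻¹ * S.det ^ (-(1:ℝ)/2) *
    Real.exp (-(1/2) * (x ⬝ᵥ (A *ᵥ x) - b^2/c)) *
    Real.exp (-(a * (b / c) - a * z)^2 / (2*s2)))) * hcancel

theorem stmt1 {d : ℕ} (α σ : ℝ → ℝ) (hsch : IsScheduler α σ)
    (p : (Fin d → ℝ) → ℝ) (hp : IsProbDensity p) (hps : HasCompactSupport p)
    (μ : Fin 2 → ℝ) (hμ : μ ≠ 0)
    (S : Matrix (Fin 2) (Fin 2) ℝ) (hS : S.PosDef)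
    (tstar : ℝ) (htstar : tstar ∈ Set.Ioo (0:ℝ) 1)
    (hg : (σ tstar)^2 / (α tstar)^2 = (μ ⬝ᵥ (S⁻¹ *ᵥ μ))⁻¹) :
    ∀ x1 x2 : Fin d → ℝ, 0 < glassZ μ S p x1 x2 →
      glassDenoiser μ S p x1 x2
        = denoiser α σ p tstar (fun j => α tstar * suffStat μ S ![x1 j, x2 j]) := by
  intro x1 x2 hZ
  obtain ⟨ht0, ht1⟩ := htstar
  set a := α tstar with ha_def
  set s2 := (σ tstar)^2 with hs2_def
  have ha : 0 < a := by
    have := hsch.mono_a (Set.left_mem_Icc.mpr zero_le_one) ⟨ht0.le, ht1.le⟩ ht0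
    simpa [hsch.a0] using this
  have hane : a ≠ 0 := ne_of_gt ha
  have hsig : 0 < σ tstar := by
    have := hsch.anti_s ⟨ht0.le, ht1.le⟩ (Set.right_mem_Icc.mpr zero_le_one) ht1
    simpa [hsch.s1] using this
  have hs2 : 0 < s2 := pow_pos hsig 2
  have hc : 0 < μ ⬝ᵥ (S⁻¹ *ᵥ μ) := by simpa using hS.inv.dotProduct_mulVec_pos hμ
  have hsym : S⁻¹ 0 1 = S⁻¹ 1 0 := by simpa using (hS.inv.1.apply 0 1).symm
  have hg' : a^2 = s2 * (μ ⬝ᵥ (S⁻¹ *ᵥ μ)) := by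
    have h := hg
    rw [div_eq_iff (pow_ne_zero 2 hane)] at h
    rw [h]
    linear_combination (-a^2) * (mul_inv_cancel₀ (ne_of_gt hc))
  -- per-coordinate constant
  set K : Fin d → ℝ := fun j =>
    (2 * Real.pi)⁻¹ * S.det ^ (-(1:ℝ)/2) *
      Real.exp (-(1/2) * ((![x1 j, x2 j]) ⬝ᵥ (S⁻¹ *ᵥ (![x1 j, x2 j]))
        - (μ ⬝ᵥ (S⁻¹ *ᵥ (![x1 j, x2 j])))^2 / (μ ⬝ᵥ (S⁻¹ *ᵥ μ))))
      * (2 * Real.pi * s2) ^ ((1:ℝ)/2) with hKdef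
  have hKpos : ∀ j, 0 < K j := by
    intro j
    have hd : (0:ℝ) < S.det := hS.det_pos
    have h1 : (0:ℝ) < S.det ^ (-(1:ℝ)/2) := Real.rpow_pos_of_pos hd _
    have h2 : (0:ℝ) < (2 * Real.pi * s2) ^ ((1:ℝ)/2) :=
      Real.rpow_pos_of_pos (by positivity) _
    have h3 : (0:ℝ) < (2 * Real.pi)⁻¹ := by positivity
    simp only [hKdef]
    positivity
  set X : Fin d → ℝ := fun j => a * suffStat μ S ![x1 j, x2 j] with hXdef
  set Kp : ℝ := ∏ j, K j with hKp
  have hKppos : 0 < Kp := Finset.prod_pos (fun j _ => hKpos j)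
  have hlik : ∀ z : Fin d → ℝ, glassLik μ S x1 x2 z
      = Kp * ∏ j, gauss1 (X j) (a * z j) s2 := by
    intro z
    unfold glassLik
    rw [hKp, ← Finset.prod_mul_distrib]
    refine Finset.prod_congr rfl (fun j _ => ?_)
    exact key S hsym μ hc a s2 hs2 hg' (![x1 j, x2 j]) (z j)
  have hZeq : glassZ μ S p x1 x2 = Kp * marginal α σ p tstar X := by
    unfold glassZ marginal
    rw [← MeasureTheory.integral_const_mul]
    congr 1; funext w
    rw [hlik w]; ring
  have hpost : ∀ z : Fin d → ℝ, glassPost μ S p x1 x2 z = post α σ p tstar z X := by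
    intro z
    unfold glassPost post
    rw [hlik z, hZeq, mul_assoc, mul_div_mul_left _ _ (ne_of_gt hKppos)]
  unfold glassDenoiser denoiser
  congr 1
  funext z
  rw [hpost z]
end

section
/- Let α, σ be schedulers, let p_data be a probability density on ℝ^d with compact support, fix 0 < t < t' < 1 and x_t ∈ ℝ^d with p_t(x_t) > 0, and fix ρ ∈ (−1, 1). Set γ̄ = ρ σ_{t'}/σ_t, ᾱ = α_{t'} − γ̄ α_t, σ̄² = σ_{t'}²(1 − ρ²). Let ᾱ_s, σ̄_s be continuously differentiable inner schedulers on [0,1] with ᾱ₀ = 0, ᾱ₁ = ᾱ, σ̄₁ = σ̄ and σ̄_s > 0 for all s ∈ [0,1]. Define the inner marginal path p_s(x̄|x_t) = ∫ ∏_{j=1}^d N(x̄^j; ᾱ_s z^j + γ̄ x_t^j, σ̄_s²) p_{1|t}(z|x_t) dz, weights w₁(s) = (∂_s σ̄_s)/σ̄_s, w₂(s) = ∂_s ᾱ_s − ᾱ_s w₁(s), w₃(s) = −γ̄ w₁(s), parameters μ(s) = (α_t, ᾱ_s + γ̄ α_t)ᵀ and Σ(s) = [[σ_t², σ_t² γ̄],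 [σ_t² γ̄, σ̄_s² + γ̄² σ_t²]], and the GLASS velocity field u_s(x̄|x_t) = w₁(s) x̄ + w₂(s) D_{μ(s),Σ(s)}(x_t, x̄) + w₃(s) x_t. Then for every s ∈ (0,1) and every x̄ ∈ ℝ^d the continuity equation holds: ∂_s p_s(x̄|x_t) + div_{x̄}( u_s(x̄|x_t) p_s(x̄|x_t) ) = 0. -/
set_option maxHeartbeats 1000000

open MeasureTheory Real Matrix
open scoped BigOperators

/-! ### Auxiliary lemmas -/

lemma gauss1_pos {v : ℝ} (hv : 0 < v) (y m : ℝ) : 0 < gauss1 y m v := by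
  unfold gauss1
  positivity

lemma gauss1_nonneg {v : ℝ} (hv : 0 < v) (y m : ℝ) : 0 ≤ gauss1 y m v :=
  (gauss1_pos hv y m).le

lemma gauss1_eq_sqrt {v : ℝ} (hv : 0 < v) (y m : ℝ) :
    gauss1 y m v = (Real.sqrt (2 * Real.pi * v))⁻¹ * Real.exp (-(y - m)^2 / (2 * v)) := by
  unfold gauss1
  rw [show (-(1:ℝ)/2) = -(1/2) by ring, Real.rpow_neg (by positivity), ← Real.sqrt_eq_rpow]

lemma gauss1_le {v : ℝ} (hv : 0 < v) (y m : ℝ) :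
    gauss1 y m v ≤ (Real.sqrt (2 * Real.pi * v))⁻¹ := by
  rw [gauss1_eq_sqrt hv]
  nth_rewrite 2 [show (Real.sqrt (2 * Real.pi * v))⁻¹
    = (Real.sqrt (2 * Real.pi * v))⁻¹ * 1 by ring]
  have h1 : Real.exp (-(y - m)^2 / (2*v)) ≤ 1 := by
    apply Real.exp_le_one_iff.2
    apply div_nonpos_of_nonpos_of_nonneg
    · simp [sq_nonneg]
    · positivity
  have h0 : (0:ℝ) ≤ (Real.sqrt (2 * Real.pi * v))⁻¹ := by positivity
  calc (Real.sqrt (2 * Real.pi * v))⁻¹ * Real.exp (-(y - m)^2 / (2 * v))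
      ≤ (Real.sqrt (2 * Real.pi * v))⁻¹ * 1 := by gcongr
    _ = (Real.sqrt (2 * Real.pi * v))⁻¹ * 1 := rfl

lemma gauss1_cont_comp {X : Type*} [TopologicalSpace X] {f g : X → ℝ} (v : ℝ)
    (hf : Continuous f) (hg : Continuous g) :
    Continuous fun x => gauss1 (f x) (g x) v := by
  unfold gauss1
  exact continuous_const.mul ((((hf.sub hg).pow 2).neg.div_const _).rexp)

lemma gauss1_contOn {X : Type*} [TopologicalSpace X] {s : Set X} {yf mf vf : X → ℝ}
    (hy : ContinuousOn yf s) (hm : ContinuousOn mf s) (hv : ContinuousOn vf s)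
    (hvpos : ∀ x ∈ s, 0 < vf x) :
    ContinuousOn (fun x => gauss1 (yf x) (mf x) (vf x)) s := by
  unfold gauss1
  apply ContinuousOn.mul
  · apply ContinuousOn.rpow_const (continuousOn_const.mul hv)
    intro x hx
    exact Or.inl (mul_ne_zero (by positivity) (hvpos x hx).ne')
  · apply Real.continuous_exp.comp_continuousOn
    exact (((hy.sub hm).pow 2).neg.div (continuousOn_const.mul hv)
      (fun x hx => by have := hvpos x hx; positivity))

lemma hasDerivAt_gauss1_y {v : ℝ} (hv : 0 < v) (m y : ℝ) :
    HasDerivAt (fun y => gauss1 y m v) (-(y - m)/v * gauss1 y m v) y := by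
  have h1 : HasDerivAt (fun y : ℝ => -(y - m)^2 / (2*v)) (-(y-m)/v) y := by
    have : HasDerivAt (fun y : ℝ => -(y - m)^2) (-(2*(y-m))) y := by
      have := ((hasDerivAt_id y).sub_const m).fun_pow 2
      simpa using this.fun_neg
    have := this.div_const (2*v)
    refine this.congr_deriv ?_
    field_simp
  have h2 := (h1.exp).const_mul ((2 * Real.pi * v) ^ (-(1:ℝ)/2))
  unfold gauss1
  refine h2.congr_deriv ?_
  ring

lemma hasDerivAt_gauss1_param {m b : ℝ → ℝ} {m' b' s y : ℝ}
    (hm : HasDerivAt m m' s) (hb : HasDerivAt b b' s)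
    (hpos : ∀ᶠ u in nhds s, 0 < b u) :
    HasDerivAt (fun u => gauss1 y (m u) ((b u)^2))
      (gauss1 y (m s) ((b s)^2) *
        (-(b'/b s) + (y - m s) * m' / (b s)^2 + (y - m s)^2 * b' / (b s)^3)) s := by
  have hbs : 0 < b s := hpos.self_of_nhds
  set f : ℝ → ℝ := fun u => (Real.sqrt (2*Real.pi) * b u)⁻¹ *
    Real.exp (-(y - m u)^2 / (2 * (b u)^2))
  have heq : ∀ᶠ u in nhds s, f u = gauss1 y (m u) ((b u)^2) := by
    filter_upwards [hpos] with u hu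
    rw [gauss1_eq_sqrt (by positivity)]
    congr 2
    rw [show 2*Real.pi*(b u)^2 = (2*Real.pi)*(b u)^2 by ring, Real.sqrt_mul (by positivity),
      Real.sqrt_sq hu.le]
  have hf : HasDerivAt f
      (f s * (-(b'/b s) + (y - m s) * m' / (b s)^2 + (y - m s)^2 * b' / (b s)^3)) s := by
    have h1 : HasDerivAt (fun u => Real.sqrt (2*Real.pi) * b u) (Real.sqrt (2*Real.pi) * b') s :=
      hb.const_mul _
    have h1' : HasDerivAt (fun u => (Real.sqrt (2*Real.pi) * b u)⁻¹)
        (-(Real.sqrt (2*Real.pi) * b') / (Real.sqrt (2*Real.pi) * b s)^2) s :=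
      h1.inv (by positivity)
    have h2 : HasDerivAt (fun u => -(y - m u)^2 / (2 * (b u)^2))
        ((y - m s) * m' / (b s)^2 + (y - m s)^2 * b' / (b s)^3) s := by
      have hnum : HasDerivAt (fun u => -(y - m u)^2) (2 * (y - m s) * m') s := by
        have := ((hasDerivAt_const s y).sub hm).fun_pow 2
        simpa using this.fun_neg
      have hden : HasDerivAt (fun u => 2 * (b u)^2) (2 * (2 * b s * b')) s := by
        simpa using (hb.pow 2).const_mul 2
      have := hnum.div hden (by positivity)
      refine this.congr_deriv ?_
      field_simp
      ring
    have := h1'.mul (h2.exp)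
    refine this.congr_deriv ?_
    simp only [f]
    have hsq : Real.sqrt (2*Real.pi) > 0 := by positivity
    field_simp
    ring
  exact (hf.congr_of_eventuallyEq (heq.mono fun u hu => hu.symm)).congr_deriv (by
    rw [heq.self_of_nhds])

lemma gauss2_factor {c b : ℝ} (hc : 0 < c) (hb : 0 < b) (A a γ z x1 x2 : ℝ) :
    gauss2 ![x1, x2] (z • ![A, a + γ * A]) !![c^2, c^2*γ; c^2*γ, b^2 + γ^2*c^2]
      = gauss1 x1 (A * z) (c^2) * gauss1 x2 (a * z + γ * x1) (b^2) := by
  set S : Matrix (Fin 2) (Fin 2) ℝ := !![c^2, c^2*γ; c^2*γ, b^2 + γ^2*c^2] with hS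
  have hdet : S.det = c^2 * b^2 := by
    rw [hS, Matrix.det_fin_two_of]; ring
  have hinv : S⁻¹ = (c^2*b^2)⁻¹ • !![b^2 + γ^2*c^2, -(c^2*γ); -(c^2*γ), c^2] := by
    apply Matrix.inv_eq_right_inv
    ext i j
    fin_cases i <;> fin_cases j <;>
      simp [hS, Matrix.mul_apply, Fin.sum_univ_two, Matrix.smul_apply] <;>
      field_simp <;> ring
  have hquad : (![x1, x2] - z • ![A, a + γ * A]) ⬝ᵥ
      (S⁻¹ *ᵥ (![x1, x2] - z • ![A, a + γ * A]))
      = (x1 - A*z)^2 / c^2 + (x2 - (a*z + γ*x1))^2 / b^2 := by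
    rw [hinv]
    simp [Matrix.mulVec, dotProduct, Fin.sum_univ_two, Matrix.smul_apply,
      Matrix.cons_val_zero, Matrix.cons_val_one, smul_eq_mul]
    field_simp
    ring
  unfold gauss2 gauss1
  rw [hquad, hdet]
  have e1 : (c^2*b^2 : ℝ) ^ (-(1:ℝ)/2) = (c*b)⁻¹ := by
    rw [show (-(1:ℝ)/2) = -(1/2) by ring, Real.rpow_neg (by positivity), ← Real.sqrt_eq_rpow,
      show c^2*b^2 = (c*b)^2 by ring, Real.sqrt_sq (by positivity)]
  have e2 : (2*Real.pi*c^2 : ℝ) ^ (-(1:ℝ)/2) = (Real.sqrt (2*Real.pi) * c)⁻¹ := by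
    rw [show (-(1:ℝ)/2) = -(1/2) by ring, Real.rpow_neg (by positivity), ← Real.sqrt_eq_rpow,
      show 2*Real.pi*c^2 = (2*Real.pi)*c^2 by ring, Real.sqrt_mul (by positivity),
      Real.sqrt_sq hc.le]
  have e3 : (2*Real.pi*b^2 : ℝ) ^ (-(1:ℝ)/2) = (Real.sqrt (2*Real.pi) * b)⁻¹ := by
    rw [show (-(1:ℝ)/2) = -(1/2) by ring, Real.rpow_neg (by positivity), ← Real.sqrt_eq_rpow,
      show 2*Real.pi*b^2 = (2*Real.pi)*b^2 by ring, Real.sqrt_mul (by positivity),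
      Real.sqrt_sq hb.le]
  rw [e1, e2, e3]
  have e4 : Real.exp (-(1/2) * ((x1 - A*z)^2 / c^2 + (x2 - (a*z + γ*x1))^2 / b^2))
      = Real.exp (-(x1 - A*z)^2 / (2*c^2)) * Real.exp (-(x2 - (a*z+γ*x1))^2 / (2*b^2)) := by
    rw [← Real.exp_add]; congr 1; field_simp; ring
  rw [e4]
  have hms : Real.sqrt (2*Real.pi) * Real.sqrt (2*Real.pi) = 2*Real.pi :=
    Real.mul_self_sqrt (by positivity)
  rw [show ((2*Real.pi)⁻¹ : ℝ) = (Real.sqrt (2*Real.pi))⁻¹ * (Real.sqrt (2*Real.pi))⁻¹ by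
    rw [← mul_inv, hms]]
  ring

lemma scalar_id (g y z x γ a b da db : ℝ) (hb : b ≠ 0) :
    g * (-(db/b) + (y - (a*z + γ*x)) * (da*z) / b^2 + (y - (a*z + γ*x))^2 * db / b^3)
    + (db/b * y + (da - a*(db/b))*z + (-γ*(db/b))*x) * (-(y - (a*z + γ*x))/b^2 * g)
    + g * (db/b) = 0 := by
  field_simp
  ring

lemma proj_norm_le {d : ℕ} (i : Fin d) :
    ‖(ContinuousLinearMap.proj i : ((Fin d → ℝ)) →L[ℝ] ℝ)‖ ≤ 1 := by
  apply ContinuousLinearMap.opNorm_le_bound _ zero_le_one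
  intro x
  simpa using norm_le_pi_norm x i

lemma smul_norm_helper {E : Type*} [SeminormedAddCommGroup E] [NormedSpace ℝ E]
    (c : ℝ) (x : E) (b : ℝ) (hc : 0 ≤ c) (h : ‖x‖ ≤ b) : ‖c • x‖ ≤ c * b := by
  rw [norm_smul, Real.norm_eq_abs, abs_of_nonneg hc]
  exact mul_le_mul_of_nonneg_left h hc

lemma clm_bound {d : ℕ} (j : Fin d) (v K w1 : ℝ) (a b : Fin d → ℝ) :
    ‖v • (∑ i, a i • (b i •
        (ContinuousLinearMap.proj (R := ℝ) (φ := fun _ : Fin d => ℝ) i)))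
      + K • (w1 • (ContinuousLinearMap.proj (R := ℝ) (φ := fun _ : Fin d => ℝ) j))‖
      ≤ |v| * (∑ i, |a i| * |b i|) + |K| * |w1| := by
  have hsum_nn : (0:ℝ) ≤ ∑ i, |a i| * |b i| :=
    Finset.sum_nonneg fun i _ => mul_nonneg (abs_nonneg _) (abs_nonneg _)
  apply ContinuousLinearMap.opNorm_le_bound
  · exact add_nonneg (mul_nonneg (abs_nonneg v) hsum_nn)
      (mul_nonneg (abs_nonneg K) (abs_nonneg w1))
  · intro x
    simp only [ContinuousLinearMap.add_apply, ContinuousLinearMap.smul_apply,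
      ContinuousLinearMap.coe_sum', Finset.sum_apply, ContinuousLinearMap.proj_apply,
      smul_eq_mul]
    have hx : ∀ i, |x i| ≤ ‖x‖ := fun i => by simpa using norm_le_pi_norm x i
    have h1 : |∑ i, a i * (b i * x i)| ≤ (∑ i, |a i| * |b i|) * ‖x‖ := by
      refine (Finset.abs_sum_le_sum_abs _ _).trans ?_
      rw [Finset.sum_mul]
      refine Finset.sum_le_sum fun i _ => ?_
      rw [abs_mul, abs_mul]
      calc |a i| * (|b i| * |x i|) ≤ |a i| * (|b i| * ‖x‖) := by
            refine mul_le_mul_of_nonneg_left ?_ (abs_nonneg _)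
            exact mul_le_mul_of_nonneg_left (hx i) (abs_nonneg _)
        _ = |a i| * |b i| * ‖x‖ := by ring
    have h2 : |K * (w1 * x j)| ≤ |K| * |w1| * ‖x‖ := by
      rw [abs_mul, abs_mul]
      calc |K| * (|w1| * |x j|) ≤ |K| * (|w1| * ‖x‖) := by
            refine mul_le_mul_of_nonneg_left ?_ (abs_nonneg _)
            exact mul_le_mul_of_nonneg_left (hx j) (abs_nonneg _)
        _ = |K| * |w1| * ‖x‖ := by ring
    rw [Real.norm_eq_abs]
    calc |v * (∑ i, a i * (b i * x i)) + K * (w1 * x j)|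
        ≤ |v * (∑ i, a i * (b i * x i))| + |K * (w1 * x j)| := abs_add_le _ _
      _ ≤ |v| * ((∑ i, |a i| * |b i|) * ‖x‖) + |K| * |w1| * ‖x‖ := by
          rw [abs_mul]
          exact add_le_add (mul_le_mul_of_nonneg_left h1 (abs_nonneg v)) h2
      _ = (|v| * (∑ i, |a i| * |b i|) + |K| * |w1|) * ‖x‖ := by ring

theorem stmt2 {d : ℕ} (α σ : ℝ → ℝ) (hsch : IsScheduler α σ)
    (p : (Fin d → ℝ) → ℝ) (hp : IsProbDensity p) (hps : HasCompactSupport p)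
    (t t' : ℝ) (ht : 0 < t) (htt' : t < t') (ht'1 : t' < 1)
    (xt : Fin d → ℝ) (hpt : 0 < marginal α σ p t xt)
    (ρ : ℝ) (hρ : ρ ∈ Set.Ioo (-1:ℝ) 1)
    (γb : ℝ) (hγ : γb = ρ * σ t' / σ t)
    (αb : ℝ) (hαb : αb = α t' - γb * α t)
    (σb : ℝ) (hσbpos : 0 < σb) (hσb : σb^2 = (σ t')^2 * (1 - ρ^2))
    (αs σs : ℝ → ℝ)
    (hαs : ContDiffOn ℝ 1 αs (Set.Icc 0 1))
    (hσs : ContDiffOn ℝ 1 σs (Set.Icc 0 1))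
    (hαs0 : αs 0 = 0) (hαs1 : αs 1 = αb) (hσs1 : σs 1 = σb)
    (hσspos : ∀ s ∈ Set.Icc (0:ℝ) 1, 0 < σs s)
    (P : ℝ → (Fin d → ℝ) → ℝ)
    (hP : P = fun s xb => ∫ z,
      (∏ j, gauss1 (xb j) (αs s * z j + γb * xt j) ((σs s)^2)) * post α σ p t z xt)
    (w1 w2 w3 : ℝ → ℝ)
    (hw1 : w1 = fun s => deriv σs s / σs s)
    (hw2 : w2 = fun s => deriv αs s - αs s * w1 s)
    (hw3 : w3 = fun s => -γb * w1 s)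
    (μf : ℝ → Fin 2 → ℝ) (hμf : μf = fun s => ![α t, αs s + γb * α t])
    (Sf : ℝ → Matrix (Fin 2) (Fin 2) ℝ)
    (hSf : Sf = fun s => !![(σ t)^2, (σ t)^2 * γb;
                           (σ t)^2 * γb, (σs s)^2 + γb^2 * (σ t)^2])
    (u : ℝ → (Fin d → ℝ) → (Fin d → ℝ))
    (hu : u = fun s xb =>
      w1 s • xb + w2 s • glassDenoiser (μf s) (Sf s) p xt xb + w3 s • xt) :
    ∀ s ∈ Set.Ioo (0:ℝ) 1, ∀ xb : Fin d → ℝ,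
      deriv (fun s' => P s' xb) s
        + ∑ j, fderiv ℝ (fun y => u s y j * P s y) xb (Pi.single j 1) = 0 := by
  obtain ⟨hp_meas, hp_nonneg, hp_one⟩ := hp
  intro s hs xb
  obtain ⟨hs0, hs1⟩ := hs
  have ht1 : t < 1 := htt'.trans ht'1
  have htmem : t ∈ Set.Icc (0:ℝ) 1 := ⟨ht.le, ht1.le⟩
  have hσt : 0 < σ t := by
    have h := hsch.anti_s htmem (Set.right_mem_Icc.2 zero_le_one) ht1
    rwa [hsch.s1] at h
  have hsmem : s ∈ Set.Icc (0:ℝ) 1 := ⟨hs0.le, hs1.le⟩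
  have hBs : 0 < σs s := hσspos s hsmem
  have hp_int : Integrable p := by
    by_contra h
    rw [integral_undef h] at hp_one
    exact one_ne_zero hp_one.symm
  have hsupp_ne : (tsupport p).Nonempty := by
    rcases Set.eq_empty_or_nonempty (tsupport p) with h | h
    · exfalso
      have hz : ∀ z, p z = 0 := fun z =>
        image_eq_zero_of_notMem_tsupport (by simp [h])
      rw [show p = (fun _ => (0:ℝ)) from funext hz] at hp_one
      simp at hp_one
    · exact h
  -- `lik` and `q`
  set lik : (Fin d → ℝ) → ℝ := fun z => ∏ j, gauss1 (xt j) (α t * z j) ((σ t)^2) with hlik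
  have hσt2 : (0:ℝ) < (σ t)^2 := by positivity
  have hlik_cont : Continuous lik := by
    apply continuous_finset_prod
    intro j _
    exact gauss1_cont_comp _ continuous_const (continuous_const.mul (continuous_apply j))
  have hlik_nonneg : ∀ z, 0 ≤ lik z := fun z =>
    Finset.prod_nonneg fun j _ => gauss1_nonneg hσt2 _ _
  have hlik_le : ∀ z, lik z ≤ (Real.sqrt (2*Real.pi*(σ t)^2))⁻¹ ^ d := by
    intro z
    have := Finset.prod_le_prod (s := Finset.univ)
      (fun j (_ : j ∈ Finset.univ) => gauss1_nonneg hσt2 (xt j) (α t * z j))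
      (fun j (_ : j ∈ Finset.univ) => gauss1_le hσt2 (xt j) (α t * z j))
    simpa using this
  set q : (Fin d → ℝ) → ℝ := fun z => post α σ p t z xt with hq
  have hq_eq : ∀ z, q z = lik z * p z / marginal α σ p t xt := fun z => rfl
  have hq_nonneg : ∀ z, 0 ≤ q z := fun z => by
    rw [hq_eq]
    exact div_nonneg (mul_nonneg (hlik_nonneg z) (hp_nonneg z)) hpt.le
  have hq_meas : Measurable q := (hlik_cont.measurable.mul hp_meas).div_const _
  have hq_zero : ∀ z, z ∉ tsupport p → q z = 0 := fun z hz => by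
    rw [hq_eq, image_eq_zero_of_notMem_tsupport hz, mul_zero, zero_div]
  have hq_int : Integrable q := by
    refine Integrable.mono'
      (hp_int.const_mul ((Real.sqrt (2*Real.pi*(σ t)^2))⁻¹ ^ d / marginal α σ p t xt))
      hq_meas.aestronglyMeasurable (Filter.Eventually.of_forall fun z => ?_)
    rw [Real.norm_eq_abs, abs_of_nonneg (hq_nonneg z), hq_eq, div_mul_eq_mul_div]
    have h1 := hlik_le z
    have h2 := hp_nonneg z
    gcongr
  have hq_one : (∫ z, q z) = 1 := by
    have : (∫ z, q z) = (∫ z, lik z * p z) / marginal α σ p t xt := by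
      simp only [hq_eq]
      exact integral_div _ _
    rw [this]
    have : (∫ z, lik z * p z) = marginal α σ p t xt := rfl
    rw [this, div_self (ne_of_gt hpt)]
  -- kernel
  set K : ℝ → (Fin d → ℝ) → (Fin d → ℝ) → ℝ :=
    fun s' z y => ∏ j, gauss1 (y j) (αs s' * z j + γb * xt j) ((σs s')^2) with hK
  have hP_eq : ∀ s' y, P s' y = ∫ z, K s' z y * q z := by
    intro s' y
    rw [hP]
  have hK_cont_z : ∀ (s' : ℝ) (y : Fin d → ℝ), Continuous fun z => K s' z y := by
    intro s' y
    apply continuous_finset_prod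
    intro j _
    exact gauss1_cont_comp _ continuous_const
      ((continuous_const.mul (continuous_apply j)).add continuous_const)
  have hK_pos : ∀ s' ∈ Set.Icc (0:ℝ) 1, ∀ z y, 0 < K s' z y := fun s' hs' z y =>
    Finset.prod_pos fun j _ => gauss1_pos (by have := hσspos s' hs'; positivity) _ _
  -- generic integrability
  have hint_mul : ∀ f : (Fin d → ℝ) → ℝ, Continuous f →
      Integrable (fun z => f z * q z) := by
    intro f hf
    obtain ⟨C, hC⟩ := hps.exists_bound_of_continuousOn hf.continuousOn
    refine Integrable.mono' (hq_int.const_mul C)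
      ((hf.measurable.mul hq_meas).aestronglyMeasurable)
      (Filter.Eventually.of_forall fun z => ?_)
    by_cases hz : z ∈ tsupport p
    · rw [Real.norm_eq_abs, abs_mul, abs_of_nonneg (hq_nonneg z)]
      exact mul_le_mul_of_nonneg_right (by simpa using hC z hz) (hq_nonneg z)
    · simp [hq_zero z hz]
  have hint_smul : ∀ f : (Fin d → ℝ) → ℝ, Continuous f →
      Integrable (fun z => (f z * q z) • z) := by
    intro f hf
    obtain ⟨C, hC⟩ := hps.exists_bound_of_continuousOn
      (f := fun z => |f z| * ‖z‖) ((hf.abs.mul continuous_norm).continuousOn)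
    refine Integrable.mono' (hq_int.const_mul C)
      (((hf.measurable.mul hq_meas).aestronglyMeasurable).smul aestronglyMeasurable_id)
      (Filter.Eventually.of_forall fun z => ?_)
    by_cases hz : z ∈ tsupport p
    · rw [norm_smul, Real.norm_eq_abs, abs_mul, abs_of_nonneg (hq_nonneg z)]
      have h2 := hC z hz
      rw [Real.norm_eq_abs, abs_of_nonneg (by positivity)] at h2
      calc |f z| * q z * ‖z‖ = (|f z| * ‖z‖) * q z := by ring
        _ ≤ C * q z := mul_le_mul_of_nonneg_right h2 (hq_nonneg z)
    · simp [hq_zero z hz]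
  -- positivity of P s
  have hP_pos : ∀ y, 0 < P s y := by
    intro y
    rw [hP_eq]
    obtain ⟨z0, hz0mem, hz0min⟩ := hps.exists_isMinOn hsupp_ne
      ((hK_cont_z s y).continuousOn)
    have hcpos : 0 < K s z0 y := hK_pos s hsmem z0 y
    have hle : ∀ z, K s z0 y * q z ≤ K s z y * q z := by
      intro z
      by_cases hz : z ∈ tsupport p
      · exact mul_le_mul_of_nonneg_right (hz0min hz) (hq_nonneg z)
      · simp [hq_zero z hz]
    calc (0:ℝ) < K s z0 y := hcpos
      _ = K s z0 y * ∫ z, q z := by rw [hq_one, mul_one]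
      _ = ∫ z, K s z0 y * q z := (integral_const_mul _ _).symm
      _ ≤ ∫ z, K s z y * q z :=
          integral_mono (hq_int.const_mul _) (hint_mul _ (hK_cont_z s y)) hle
  -- factorization
  have hglassLik : ∀ y z, glassLik (μf s) (Sf s) xt y z = lik z * K s z y := by
    intro y z
    unfold glassLik
    simp only [hlik, hK, hμf, hSf]
    rw [← Finset.prod_mul_distrib]
    apply Finset.prod_congr rfl
    intro j _
    exact gauss2_factor hσt hBs (α t) (αs s) γb (z j) (xt j) (y j)
  have hM0 : marginal α σ p t xt ≠ 0 := ne_of_gt hpt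
  have hglassZ : ∀ y, glassZ (μf s) (Sf s) p xt y = marginal α σ p t xt * P s y := by
    intro y
    unfold glassZ
    rw [hP_eq]
    have hptw : ∀ w, glassLik (μf s) (Sf s) xt y w * p w
        = marginal α σ p t xt * (K s w y * q w) := by
      intro w
      rw [hglassLik y w, hq_eq]
      field_simp
    simp only [hptw]
    exact integral_const_mul _ _
  have hglassPost : ∀ y z, glassPost (μf s) (Sf s) p xt y z
      = (K s z y / P s y) * q z := by
    intro y z
    unfold glassPost
    rw [hglassLik, hglassZ, hq_eq]
    have hP0 : P s y ≠ 0 := ne_of_gt (hP_pos y)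
    field_simp
  have hden : ∀ y j, glassDenoiser (μf s) (Sf s) p xt y j * P s y
      = ∫ z, z j * (K s z y * q z) := by
    intro y j
    have hP0 : P s y ≠ 0 := ne_of_gt (hP_pos y)
    unfold glassDenoiser
    have hipost : (fun z => glassPost (μf s) (Sf s) p xt y z • z)
        = fun z => ((K s z y / P s y) * q z) • z := by
      funext z; rw [hglassPost]
    rw [hipost]
    have hintv : Integrable (fun z => ((K s z y / P s y) * q z) • z) :=
      hint_smul _ ((hK_cont_z s y).div_const _)
    have happ : (∫ z, ((K s z y / P s y) * q z) • z) j
        = ∫ z, ((K s z y / P s y) * q z) * z j := by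
      have h := (ContinuousLinearMap.proj (R := ℝ) (φ := fun _ : Fin d => ℝ) j
        ).integral_comp_comm hintv
      have h2 : (∫ z, ((K s z y / P s y) * q z) • z) j
          = (ContinuousLinearMap.proj (R := ℝ) (φ := fun _ : Fin d => ℝ) j)
            (∫ z, ((K s z y / P s y) * q z) • z) := rfl
      rw [h2, ← h]
      congr 1
    rw [happ]
    have hre : (fun z => ((K s z y / P s y) * q z) * z j)
        = fun z => (P s y)⁻¹ * (z j * (K s z y * q z)) := by
      funext z
      field_simp
    rw [hre, integral_const_mul]
    field_simp
  -- velocity identity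
  have hu_eq : ∀ y j, u s y j * P s y
      = ∫ z, (w1 s * y j + w2 s * z j + w3 s * xt j) * (K s z y * q z) := by
    intro y j
    have huj : u s y j = w1 s * y j
        + w2 s * glassDenoiser (μf s) (Sf s) p xt y j + w3 s * xt j := by
      rw [hu]
      simp [Pi.add_apply, Pi.smul_apply, smul_eq_mul]
    rw [huj]
    have hi1 : Integrable (fun z => (w1 s * y j + w3 s * xt j) * (K s z y * q z)) := by
      have := hint_mul (fun z => (w1 s * y j + w3 s * xt j) * K s z y)
        (continuous_const.mul (hK_cont_z s y))
      simpa [mul_assoc] using this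
    have hi2 : Integrable (fun z => (w2 s) * (z j * (K s z y * q z))) := by
      have := hint_mul (fun z => w2 s * (z j * K s z y))
        (continuous_const.mul ((continuous_apply j).mul (hK_cont_z s y)))
      simpa [mul_assoc] using this
    have expand : (w1 s * y j + w2 s * glassDenoiser (μf s) (Sf s) p xt y j
          + w3 s * xt j) * P s y
        = (w1 s * y j + w3 s * xt j) * (∫ z, K s z y * q z)
          + w2 s * (glassDenoiser (μf s) (Sf s) p xt y j * P s y) := by
      rw [← hP_eq]
      ring
    rw [expand, hden y j, ← integral_const_mul (w1 s * y j + w3 s * xt j),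
      ← integral_const_mul (w2 s), ← integral_add hi1 hi2]
    congr 1
    funext z
    ring
  -- scheduler derivative facts
  have hA_dAt : ∀ s' ∈ Set.Ioo (0:ℝ) 1, HasDerivAt αs (deriv αs s') s' := by
    intro s' hs'
    exact ((hαs.differentiableOn one_ne_zero).differentiableAt
      (Icc_mem_nhds hs'.1 hs'.2)).hasDerivAt
  have hB_dAt : ∀ s' ∈ Set.Ioo (0:ℝ) 1, HasDerivAt σs (deriv σs s') s' := by
    intro s' hs'
    exact ((hσs.differentiableOn one_ne_zero).differentiableAt
      (Icc_mem_nhds hs'.1 hs'.2)).hasDerivAt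
  have hA_dcont : ContinuousOn (deriv αs) (Set.Ioo 0 1) := by
    have h1 := hαs.continuousOn_derivWithin (uniqueDiffOn_Icc one_pos) le_rfl
    apply (h1.mono Set.Ioo_subset_Icc_self).congr
    intro x hx
    exact (derivWithin_of_mem_nhds (Icc_mem_nhds hx.1 hx.2)).symm
  have hB_dcont : ContinuousOn (deriv σs) (Set.Ioo 0 1) := by
    have h1 := hσs.continuousOn_derivWithin (uniqueDiffOn_Icc one_pos) le_rfl
    apply (h1.mono Set.Ioo_subset_Icc_self).congr
    intro x hx
    exact (derivWithin_of_mem_nhds (Icc_mem_nhds hx.1 hx.2)).symm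
  have hB_ev : ∀ s' ∈ Set.Ioo (0:ℝ) 1, ∀ᶠ v in nhds s', 0 < σs v := by
    intro s' hs'
    have hct : ContinuousAt σs s' :=
      hσs.continuousOn.continuousAt (Icc_mem_nhds hs'.1 hs'.2)
    have h := hct.preimage_mem_nhds
      (Ioi_mem_nhds (hσspos s' (Set.Ioo_subset_Icc_self hs')))
    filter_upwards [h] with v hv
    exact hv
  -- epsilon neighbourhood inside Ioo 0 1
  obtain ⟨ε, hε, hball⟩ := Metric.isOpen_iff.1 isOpen_Ioo s ⟨hs0, hs1⟩
  have hcb_sub : Metric.closedBall s (ε/2) ⊆ Set.Ioo 0 1 := fun x hx =>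
    hball (lt_of_le_of_lt (Metric.mem_closedBall.1 hx) (by linarith) : x ∈ Metric.ball s ε)
  have hb2_sub : Metric.ball s (ε/2) ⊆ Set.Ioo 0 1 := fun x hx =>
    hcb_sub (Metric.ball_subset_closedBall hx)
  -- time derivative data
  set dg : ℝ → (Fin d → ℝ) → Fin d → ℝ := fun s' z j =>
    gauss1 (xb j) (αs s' * z j + γb * xt j) ((σs s')^2) *
      (-(deriv σs s'/σs s')
        + (xb j - (αs s' * z j + γb * xt j)) * (deriv αs s' * z j) / (σs s')^2
        + (xb j - (αs s' * z j + γb * xt j))^2 * deriv σs s' / (σs s')^3) with hdg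
  set Ks : ℝ → (Fin d → ℝ) → ℝ := fun s' z =>
    ∑ j, (∏ i ∈ Finset.univ.erase j,
        gauss1 (xb i) (αs s' * z i + γb * xt i) ((σs s')^2)) * dg s' z j with hKs
  have hK_dAt : ∀ s' ∈ Set.Ioo (0:ℝ) 1, ∀ z,
      HasDerivAt (fun v => K v z xb) (Ks s' z) s' := by
    intro s' hs' z
    have h := HasDerivAt.fun_finset_prod (u := Finset.univ)
      (f := fun j v => gauss1 (xb j) (αs v * z j + γb * xt j) ((σs v)^2))
      (f' := fun j => dg s' z j)
      (fun j _ => by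
        have hm : HasDerivAt (fun v => αs v * z j + γb * xt j) (deriv αs s' * z j) s' :=
          ((hA_dAt s' hs').mul_const _).add_const _
        simpa only [hdg] using
          hasDerivAt_gauss1_param hm (hB_dAt s' hs') (hB_ev s' hs'))
    simpa [hK, hKs, smul_eq_mul] using h
  -- continuity of Ks on a compact set
  set T : Set (ℝ × (Fin d → ℝ)) := (Metric.closedBall s (ε/2)) ×ˢ (tsupport p) with hT
  have hT_cpt : IsCompact T := (isCompact_closedBall s (ε/2)).prod hps
  have hT1 : ∀ r : ℝ × (Fin d → ℝ), r ∈ T → r.1 ∈ Set.Ioo (0:ℝ) 1 := fun r hr =>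
    hcb_sub hr.1
  have hA_pair : ContinuousOn (fun r : ℝ × (Fin d → ℝ) => αs r.1) T :=
    hαs.continuousOn.comp continuous_fst.continuousOn
      (fun r hr => Set.Ioo_subset_Icc_self (hT1 r hr))
  have hB_pair : ContinuousOn (fun r : ℝ × (Fin d → ℝ) => σs r.1) T :=
    hσs.continuousOn.comp continuous_fst.continuousOn
      (fun r hr => Set.Ioo_subset_Icc_self (hT1 r hr))
  have hdA_pair : ContinuousOn (fun r : ℝ × (Fin d → ℝ) => deriv αs r.1) T :=
    hA_dcont.comp continuous_fst.continuousOn hT1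
  have hdB_pair : ContinuousOn (fun r : ℝ × (Fin d → ℝ) => deriv σs r.1) T :=
    hB_dcont.comp continuous_fst.continuousOn hT1
  have hBne : ∀ r : ℝ × (Fin d → ℝ), r ∈ T → σs r.1 ≠ 0 := fun r hr =>
    ne_of_gt (hσspos r.1 (Set.Ioo_subset_Icc_self (hT1 r hr)))
  have hz_pair : ∀ i, ContinuousOn (fun r : ℝ × (Fin d → ℝ) => r.2 i) T := fun i =>
    ((continuous_apply i).comp continuous_snd).continuousOn
  have hm_pair : ∀ i, ContinuousOn
      (fun r : ℝ × (Fin d → ℝ) => αs r.1 * r.2 i + γb * xt i) T := fun i =>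
    (hA_pair.mul (hz_pair i)).add continuousOn_const
  have hg_pair : ∀ i, ContinuousOn
      (fun r : ℝ × (Fin d → ℝ) =>
        gauss1 (xb i) (αs r.1 * r.2 i + γb * xt i) ((σs r.1)^2)) T := fun i =>
    gauss1_contOn continuousOn_const (hm_pair i) (hB_pair.pow 2)
      (fun r hr => by
        have := hσspos r.1 (Set.Ioo_subset_Icc_self (hT1 r hr)); positivity)
  have hdg_pair : ∀ j, ContinuousOn (fun r : ℝ × (Fin d → ℝ) => dg r.1 r.2 j) T := by
    intro j
    simp only [hdg]
    apply (hg_pair j).mul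
    apply ContinuousOn.add
    apply ContinuousOn.add
    · exact (hdB_pair.div hB_pair hBne).neg
    · exact ((continuousOn_const.sub (hm_pair j)).mul
        (hdA_pair.mul (hz_pair j))).div (hB_pair.pow 2)
        (fun r hr => pow_ne_zero _ (hBne r hr))
    · exact (((continuousOn_const.sub (hm_pair j)).pow 2).mul hdB_pair).div
        (hB_pair.pow 3) (fun r hr => pow_ne_zero _ (hBne r hr))
  have hKs_pairCont : ContinuousOn (fun r : ℝ × (Fin d → ℝ) => Ks r.1 r.2) T := by
    simp only [hKs]
    apply continuousOn_finset_sum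
    intro j _
    exact (continuousOn_finset_prod _ (fun i _ => hg_pair i)).mul (hdg_pair j)
  obtain ⟨C1, hC1⟩ := hT_cpt.exists_bound_of_continuousOn hKs_pairCont
  -- continuity of z ↦ dg s' z j  (for fixed s')
  have hdg_cont_z : ∀ (s' : ℝ), σs s' ≠ 0 → ∀ j, Continuous fun z => dg s' z j := by
    intro s' hs' j
    simp only [hdg]
    apply Continuous.mul
    · exact gauss1_cont_comp _ continuous_const
        ((continuous_const.mul (continuous_apply j)).add continuous_const)
    · apply Continuous.add
      apply Continuous.add
      · exact continuous_const
      · exact ((continuous_const.sub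
          ((continuous_const.mul (continuous_apply j)).add continuous_const)).mul
          (continuous_const.mul (continuous_apply j))).div_const _
      · exact (((continuous_const.sub
          ((continuous_const.mul (continuous_apply j)).add continuous_const)).pow 2).mul
          continuous_const).div_const _
  have hKs_cont_z : ∀ (s' : ℝ), σs s' ≠ 0 → Continuous fun z => Ks s' z := by
    intro s' hs'
    simp only [hKs]
    apply continuous_finset_sum
    intro j _
    apply Continuous.mul
    · apply continuous_finset_prod
      intro i _
      exact gauss1_cont_comp _ continuous_const
        ((continuous_const.mul (continuous_apply i)).add continuous_const)
    · exact hdg_cont_z s' hs' j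
  -- dominated differentiation in time
  have hder := hasDerivAt_integral_of_dominated_loc_of_deriv_le
    (F := fun s' z => K s' z xb * q z) (F' := fun s' z => Ks s' z * q z)
    (x₀ := s) (bound := fun z => C1 * q z) (Metric.ball_mem_nhds s (half_pos hε))
    (Filter.Eventually.of_forall fun s' =>
      (((hK_cont_z s' xb).measurable.mul hq_meas).aestronglyMeasurable))
    (hint_mul _ (hK_cont_z s xb))
    (((hKs_cont_z s (ne_of_gt hBs)).measurable.mul hq_meas).aestronglyMeasurable)
    (Filter.Eventually.of_forall fun z => by
      intro s' hs'
      by_cases hz : z ∈ tsupport p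
      · rw [Real.norm_eq_abs, abs_mul, abs_of_nonneg (hq_nonneg z)]
        refine mul_le_mul_of_nonneg_right ?_ (hq_nonneg z)
        have := hC1 (s', z) ⟨Metric.ball_subset_closedBall hs', hz⟩
        simpa using this
      · simp [hq_zero z hz])
    ((hq_int.const_mul C1))
    (Filter.Eventually.of_forall fun z => by
      intro s' hs'
      exact (hK_dAt s' (hb2_sub hs') z).mul_const (q z))
  have hd : HasDerivAt (fun s' => P s' xb) (∫ z, Ks s z * q z) s := by
    have heqf : (fun s' => P s' xb) = fun s' => ∫ z, K s' z xb * q z :=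
      funext fun s' => hP_eq s' xb
    rw [heqf]
    exact hder.2
  -- space derivatives
  set g0 : (Fin d → ℝ) → Fin d → ℝ := fun z i =>
    gauss1 (xb i) (αs s * z i + γb * xt i) ((σs s)^2) with hg0
  set c0 : (Fin d → ℝ) → Fin d → ℝ := fun z i =>
    -(xb i - (αs s * z i + γb * xt i))/(σs s)^2 * g0 z i with hc0
  set DD : Fin d → (Fin d → ℝ) → ℝ := fun j z =>
    (w1 s * xb j + w2 s * z j + w3 s * xt j)
      * ((∏ l ∈ Finset.univ.erase j, g0 z l) * c0 z j)
    + K s z xb * w1 s with hDD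
  have hBs2 : (0:ℝ) < (σs s)^2 := by positivity
  have hgc : ∀ i : Fin d, Continuous fun z : Fin d → ℝ =>
      gauss1 (xb i) (αs s * z i + γb * xt i) ((σs s)^2) := fun i =>
    gauss1_cont_comp _ continuous_const
      ((continuous_const.mul (continuous_apply i)).add continuous_const)
  have hDD_cont : ∀ j, Continuous fun z => DD j z := by
    intro j
    simp only [hDD, hc0, hg0]
    apply Continuous.add
    · apply Continuous.mul
      · exact (continuous_const.add
          (continuous_const.mul (continuous_apply j))).add continuous_const
      · apply Continuous.mul
        · exact continuous_finset_prod _ (fun l _ => hgc l)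
        · exact (((continuous_const.sub
            ((continuous_const.mul (continuous_apply j)).add continuous_const)).neg.div_const
            _).mul (hgc j))
    · exact (hK_cont_z s xb).mul continuous_const
  have hproj : ∀ (i : Fin d) (y : Fin d → ℝ),
      HasFDerivAt (fun w : Fin d → ℝ => w i)
        (ContinuousLinearMap.proj (R := ℝ) (φ := fun _ : Fin d => ℝ) i) y := by
    intro i y
    exact (ContinuousLinearMap.proj (R := ℝ) (φ := fun _ : Fin d => ℝ) i).hasFDerivAt
  -- space derivative of each coordinate of the flux
  have hfd : ∀ j, fderiv ℝ (fun y => u s y j * P s y) xb (Pi.single j 1)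
      = ∫ z, DD j z * q z := by
    intro j
    have hfunc : (fun y => u s y j * P s y)
        = fun y => ∫ z, (w1 s * y j + w2 s * z j + w3 s * xt j) * (K s z y * q z) :=
      funext fun y => hu_eq y j
    set L : (Fin d → ℝ) → (Fin d → ℝ) → ((Fin d → ℝ) →L[ℝ] ℝ) := fun y z =>
      q z • ((w1 s * y j + w2 s * z j + w3 s * xt j) •
          (∑ i, (∏ l ∈ Finset.univ.erase i,
              gauss1 (y l) (αs s * z l + γb * xt l) ((σs s)^2)) •
            ((-(y i - (αs s * z i + γb * xt i))/(σs s)^2 *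
                gauss1 (y i) (αs s * z i + γb * xt i) ((σs s)^2)) •
              (ContinuousLinearMap.proj (R := ℝ) (φ := fun _ : Fin d => ℝ) i)))
        + (K s z y) • (w1 s •
          (ContinuousLinearMap.proj (R := ℝ) (φ := fun _ : Fin d => ℝ) j))) with hL
    have hF_dAt : ∀ (y : Fin d → ℝ) (z : Fin d → ℝ),
        HasFDerivAt
          (fun y' => (w1 s * y' j + w2 s * z j + w3 s * xt j) * (K s z y' * q z))
          (L y z) y := by
      intro y z
      have hv : HasFDerivAt
          (fun y' : Fin d → ℝ => w1 s * y' j + w2 s * z j + w3 s * xt j)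
          (w1 s • (ContinuousLinearMap.proj (R := ℝ) (φ := fun _ : Fin d => ℝ) j)) y := by
        have h1 := (((hproj j y).const_mul (w1 s)).add_const (w2 s * z j)).add_const
          (w3 s * xt j)
        simpa using h1
      have hKy : HasFDerivAt (fun y' => K s z y')
          (∑ i, (∏ l ∈ Finset.univ.erase i,
              gauss1 (y l) (αs s * z l + γb * xt l) ((σs s)^2)) •
            ((-(y i - (αs s * z i + γb * xt i))/(σs s)^2 *
                gauss1 (y i) (αs s * z i + γb * xt i) ((σs s)^2)) •
              (ContinuousLinearMap.proj (R := ℝ) (φ := fun _ : Fin d => ℝ) i))) y := by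
        have h := HasFDerivAt.finset_prod (u := Finset.univ)
          (g := fun i (y' : Fin d → ℝ) =>
            gauss1 (y' i) (αs s * z i + γb * xt i) ((σs s)^2))
          (g' := fun i => (-(y i - (αs s * z i + γb * xt i))/(σs s)^2 *
              gauss1 (y i) (αs s * z i + γb * xt i) ((σs s)^2)) •
            (ContinuousLinearMap.proj (R := ℝ) (φ := fun _ : Fin d => ℝ) i))
          (fun i _ => by
            have h := (hasDerivAt_gauss1_y hBs2 (αs s * z i + γb * xt i) (y i)).comp_hasFDerivAt y
              (hproj i y)
            exact h)
        simpa [hK] using h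
      have h3 := (hv.mul hKy).mul_const (q z)
      have h4 : (fun y' => (w1 s * y' j + w2 s * z j + w3 s * xt j) * (K s z y' * q z))
          = fun y' => ((w1 s * y' j + w2 s * z j + w3 s * xt j) * K s z y') * q z :=
        funext fun y' => by ring
      rw [h4]
      exact h3
    -- bound on a compact set
    have hT3_cpt : IsCompact ((Metric.closedBall xb 1) ×ˢ (tsupport p)) :=
      (isCompact_closedBall xb 1).prod hps
    set Φ : ((Fin d → ℝ) × (Fin d → ℝ)) → ℝ := fun r =>
      |w1 s * r.1 j + w2 s * r.2 j + w3 s * xt j| *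
        (∑ i, |∏ l ∈ Finset.univ.erase i,
            gauss1 (r.1 l) (αs s * r.2 l + γb * xt l) ((σs s)^2)| *
          |-(r.1 i - (αs s * r.2 i + γb * xt i))/(σs s)^2 *
            gauss1 (r.1 i) (αs s * r.2 i + γb * xt i) ((σs s)^2)|)
      + |K s r.2 r.1| * |w1 s| with hΦ
    have hgp : ∀ l : Fin d, Continuous fun r : (Fin d → ℝ) × (Fin d → ℝ) =>
        gauss1 (r.1 l) (αs s * r.2 l + γb * xt l) ((σs s)^2) := fun l =>
      gauss1_cont_comp _ ((continuous_apply l).comp continuous_fst)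
        ((continuous_const.mul ((continuous_apply l).comp continuous_snd)).add
          continuous_const)
    have hΦ_cont : Continuous Φ := by
      simp only [hΦ]
      apply Continuous.add
      · apply Continuous.mul
        · exact ((continuous_const.mul ((continuous_apply j).comp continuous_fst)).add
            ((continuous_const.mul ((continuous_apply j).comp continuous_snd)))).add
            continuous_const |>.abs
        · apply continuous_finset_sum
          intro i _
          apply Continuous.mul
          · exact (continuous_finset_prod _ (fun l _ => hgp l)).abs
          · exact (((((continuous_apply i).comp continuous_fst).sub
              ((continuous_const.mul ((continuous_apply i).comp continuous_snd)).add
                continuous_const)).neg.div_const _).mul (hgp i)).abs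
      · apply Continuous.mul
        · simp only [hK]
          exact (continuous_finset_prod _ (fun l _ => hgp l)).abs
        · exact continuous_const
    obtain ⟨C2, hC2⟩ := hT3_cpt.exists_bound_of_continuousOn hΦ_cont.continuousOn
    have hLbound : ∀ (z : Fin d → ℝ), ∀ y ∈ Metric.closedBall xb 1,
        ‖L y z‖ ≤ C2 * q z := by
      intro z y hy
      by_cases hz : z ∈ tsupport p
      · have hnorm : ‖L y z‖ ≤ q z * Φ (y, z) := by
          simp only [hL]
          refine smul_norm_helper (E := (Fin d → ℝ) →L[ℝ] ℝ) _ _ _ (hq_nonneg z) ?_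
          simp only [hΦ]
          exact clm_bound j _ _ _ _ _
        have hΦb : Φ (y, z) ≤ C2 := by
          have h := hC2 (y, z) ⟨hy, hz⟩
          calc Φ (y, z) ≤ |Φ (y, z)| := le_abs_self _
            _ ≤ C2 := by simpa using h
        calc ‖L y z‖ ≤ q z * Φ (y, z) := hnorm
          _ ≤ q z * C2 := mul_le_mul_of_nonneg_left hΦb (hq_nonneg z)
          _ = C2 * q z := by ring
      · have hLz : L y z = 0 := by
          simp only [hL]
          rw [hq_zero z hz, zero_smul]
        rw [hLz, hq_zero z hz, norm_zero, mul_zero]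
    have hinner_cont : Continuous fun z : Fin d → ℝ =>
        ((w1 s * xb j + w2 s * z j + w3 s * xt j) •
          (∑ i, (∏ l ∈ Finset.univ.erase i,
              gauss1 (xb l) (αs s * z l + γb * xt l) ((σs s)^2)) •
            ((-(xb i - (αs s * z i + γb * xt i))/(σs s)^2 *
                gauss1 (xb i) (αs s * z i + γb * xt i) ((σs s)^2)) •
              (ContinuousLinearMap.proj (R := ℝ) (φ := fun _ : Fin d => ℝ) i)))
        + (K s z xb) • (w1 s •
            (ContinuousLinearMap.proj (R := ℝ) (φ := fun _ : Fin d => ℝ) j))) := by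
      apply Continuous.add
      · apply Continuous.fun_smul
        · exact (continuous_const.add
            (continuous_const.mul (continuous_apply j))).add continuous_const
        · apply continuous_finset_sum
          intro i _
          apply Continuous.fun_smul
          · exact continuous_finset_prod _ (fun l _ => hgc l)
          · exact Continuous.fun_smul
              (((continuous_const.sub
                ((continuous_const.mul (continuous_apply i)).add
                  continuous_const)).neg.div_const _).mul (hgc i))
              continuous_const
      · exact Continuous.fun_smul (hK_cont_z s xb) continuous_const
    have hLmeas : AEStronglyMeasurable (fun z => L xb z) volume := by
      simp only [hL]
      exact hq_meas.aestronglyMeasurable.smul hinner_cont.aestronglyMeasurable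
    have hLint : Integrable (fun z => L xb z) :=
      Integrable.mono' (hq_int.const_mul C2) hLmeas
        (Filter.Eventually.of_forall fun z =>
          hLbound z xb (Metric.mem_closedBall_self zero_le_one))
    have hGder := hasFDerivAt_integral_of_dominated_of_fderiv_le
      (F := fun y z => (w1 s * y j + w2 s * z j + w3 s * xt j) * (K s z y * q z))
      (F' := L) (x₀ := xb) (bound := fun z => C2 * q z) (Metric.ball_mem_nhds xb zero_lt_one)
      (Filter.Eventually.of_forall fun y =>
        ((((continuous_const.add (continuous_const.mul (continuous_apply j))).add
            continuous_const).measurable.mul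
          ((hK_cont_z s y).measurable.mul hq_meas)).aestronglyMeasurable))
      (by
        have h := hint_mul (fun z => (w1 s * xb j + w2 s * z j + w3 s * xt j) * K s z xb)
          (((continuous_const.add (continuous_const.mul (continuous_apply j))).add
            continuous_const).mul (hK_cont_z s xb))
        simpa [mul_assoc] using h)
      hLmeas
      (Filter.Eventually.of_forall fun z y hy =>
        hLbound z y (Metric.ball_subset_closedBall hy))
      (hq_int.const_mul C2)
      (Filter.Eventually.of_forall fun z y _ => hF_dAt y z)
    rw [hfunc, hGder.fderiv, ContinuousLinearMap.integral_apply hLint (Pi.single j 1)]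
    congr 1
    funext z
    simp only [hL, hDD, hc0, hg0, hK, ContinuousLinearMap.smul_apply,
      ContinuousLinearMap.add_apply, ContinuousLinearMap.coe_sum',
      Finset.sum_apply, ContinuousLinearMap.proj_apply, smul_eq_mul,
      Pi.single_apply, mul_ite, mul_one, mul_zero, Finset.sum_ite_eq,
      Finset.sum_ite_eq', Finset.mem_univ, if_true]
    ring
  -- final assembly
  have hKs_q_int : Integrable (fun z => Ks s z * q z) :=
    hint_mul _ (hKs_cont_z s (ne_of_gt hBs))
  have hDD_int : ∀ j ∈ Finset.univ, Integrable (fun z => DD j z * q z) :=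
    fun j _ => hint_mul _ (hDD_cont j)
  rw [hd.deriv]
  rw [Finset.sum_congr rfl (fun j (_ : j ∈ Finset.univ) => hfd j)]
  rw [← integral_finset_sum _ hDD_int,
    ← integral_add hKs_q_int (integrable_finset_sum _ hDD_int)]
  have hzero : ∀ z : Fin d → ℝ, Ks s z * q z + ∑ j, DD j z * q z = 0 := by
    intro z
    have hterm : ∀ j, (∏ i ∈ Finset.univ.erase j, g0 z i) * dg s z j + DD j z = 0 := by
      intro j
      have hKfact : K s z xb = (∏ l ∈ Finset.univ.erase j, g0 z l) * g0 z j := by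
        simp only [hK, hg0]
        exact (Finset.prod_erase_mul _ _ (Finset.mem_univ j)).symm
      have hid := scalar_id (g0 z j) (xb j) (z j) (xt j) γb (αs s) (σs s)
        (deriv αs s) (deriv σs s) (ne_of_gt hBs)
      simp only [hDD]
      rw [hKfact]
      simp only [hdg, hc0, hg0, hw1, hw2, hw3] at hid ⊢
      linear_combination
        (∏ l ∈ Finset.univ.erase j,
          gauss1 (xb l) (αs s * z l + γb * xt l) ((σs s)^2)) * hid
    have hKs_eq : Ks s z = ∑ j, (∏ i ∈ Finset.univ.erase j, g0 z i) * dg s z j := by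
      simp only [hKs, hg0]
    rw [hKs_eq, Finset.sum_mul, ← Finset.sum_add_distrib]
    apply Finset.sum_eq_zero
    intro j _
    have h := hterm j
    calc (∏ i ∈ Finset.univ.erase j, g0 z i) * dg s z j * q z + DD j z * q z
        = ((∏ i ∈ Finset.univ.erase j, g0 z i) * dg s z j + DD j z) * q z := by ring
      _ = 0 * q z := by rw [h]
      _ = 0 := by ring
  rw [show (fun z => Ks s z * q z + ∑ j, DD j z * q z) = fun _ => (0:ℝ) from
    funext fun z => hzero z]
  simp
end

section
/- Let α, σ be schedulers, let t ∈ (0,1), and let p_data be a probability density on ℝ^d with compact support. Define the marginal vector field u_t(x) = (σ̇_t/σ_t) x + (α̇_t − α_t σ̇_t/σ_t) D_t(x), where σ̇_t, α̇_t denote the time derivatives of the schedulers. Then for every x ∈ ℝ^d: u_t(x) = (α̇_t/α_t) x + ((α̇_t/α_t) σ_t² − σ̇_t σ_t) ∇ log p_t(x), i.e., the flow matching marginal vector field coincides with the probability flow ODE vector field with diffusion coefficient ν_t² = 2(α̇_t/α_t)σ_t² − 2σ̇_tσ_t. -/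
open MeasureTheory Real Matrix
open scoped BigOperators

noncomputable def myC (s2 : ℝ) : ℝ := (2 * Real.pi * s2) ^ (-(1:ℝ)/2)

noncomputable def myF {d : ℕ} (a s2 : ℝ) (p : (Fin d → ℝ) → ℝ) (y z : Fin d → ℝ) : ℝ :=
  myC s2 ^ d * Real.exp (∑ j, -((y j - a * z j)^2/(2*s2))) * p z

noncomputable def myW {d : ℕ} (a s2 : ℝ) (y z : Fin d → ℝ) : (Fin d → ℝ) →L[ℝ] ℝ :=
  ∑ i : Fin d, (-((y i - a * z i)/s2)) • ContinuousLinearMap.proj i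

lemma myC_pos {s2 : ℝ} (hs2 : 0 < s2) : 0 < myC s2 :=
  Real.rpow_pos_of_pos (by positivity) _

lemma gauss1_eq (y m s2 : ℝ) :
    (2 * Real.pi * s2) ^ (-(1:ℝ)/2) * Real.exp (-(y - m)^2 / (2 * s2))
      = myC s2 * Real.exp (-((y - m)^2/(2*s2))) := by
  rw [myC, neg_div, neg_div]

lemma prod_gauss {d : ℕ} (a s2 : ℝ) (y z : Fin d → ℝ) :
    (∏ j, (2 * Real.pi * s2) ^ (-(1:ℝ)/2) * Real.exp (-(y j - a * z j)^2 / (2 * s2)))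
      = myC s2 ^ d * Real.exp (∑ j, -((y j - a * z j)^2/(2*s2))) := by
  rw [Real.exp_sum, Finset.prod_mul_distrib, Finset.prod_const]
  simp [myC, neg_div, Finset.card_univ]

lemma exp_sum_le_one {d : ℕ} {a s2 : ℝ} (hs2 : 0 < s2) (y z : Fin d → ℝ) :
    Real.exp (∑ j, -((y j - a * z j)^2/(2*s2))) ≤ 1 := by
  rw [Real.exp_le_one_iff]
  apply Finset.sum_nonpos
  intro j _
  have : 0 ≤ (y j - a * z j)^2/(2*s2) := by positivity
  linarith

lemma myF_nonneg {d : ℕ} {a s2 : ℝ} (hs2 : 0 < s2) {p : (Fin d → ℝ) → ℝ}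
    (hnn : ∀ z, 0 ≤ p z) (y z : Fin d → ℝ) : 0 ≤ myF a s2 p y z := by
  have := myC_pos hs2
  have h1 : 0 ≤ Real.exp (∑ j, -((y j - a * z j)^2/(2*s2))) := (Real.exp_pos _).le
  unfold myF
  exact mul_nonneg (mul_nonneg (by positivity) h1) (hnn z)

lemma myF_le {d : ℕ} {a s2 : ℝ} (hs2 : 0 < s2) {p : (Fin d → ℝ) → ℝ}
    (hnn : ∀ z, 0 ≤ p z) (y z : Fin d → ℝ) :
    myF a s2 p y z ≤ myC s2 ^ d * p z := by
  have hc := myC_pos hs2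
  unfold myF
  calc myC s2 ^ d * Real.exp (∑ j, -((y j - a * z j)^2/(2*s2))) * p z
      ≤ myC s2 ^ d * 1 * p z := by
        apply mul_le_mul_of_nonneg_right _ (hnn z)
        exact mul_le_mul_of_nonneg_left (exp_sum_le_one hs2 y z) (by positivity)
    _ = myC s2 ^ d * p z := by ring

lemma myF_aesm {d : ℕ} {a s2 : ℝ} {p : (Fin d → ℝ) → ℝ} (hmeas : Measurable p)
    (y : Fin d → ℝ) : AEStronglyMeasurable (myF a s2 p y) (volume : Measure (Fin d → ℝ)) := by
  apply AEStronglyMeasurable.mul _ hmeas.aestronglyMeasurable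
  apply Continuous.aestronglyMeasurable
  apply continuous_const.mul
  apply Real.continuous_exp.comp
  apply continuous_finset_sum
  intro j _
  fun_prop

lemma p_integrable {d : ℕ} {p : (Fin d → ℝ) → ℝ} (hint1 : (∫ z, p z) = 1) :
    Integrable p (volume : Measure (Fin d → ℝ)) := by
  by_contra h
  rw [integral_undef h] at hint1
  norm_num at hint1

lemma myF_integrable {d : ℕ} {a s2 : ℝ} (hs2 : 0 < s2) {p : (Fin d → ℝ) → ℝ}
    (hmeas : Measurable p) (hnn : ∀ z, 0 ≤ p z) (hint1 : (∫ z, p z) = 1)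
    (y : Fin d → ℝ) : Integrable (myF a s2 p y) := by
  apply Integrable.mono' ((p_integrable hint1).const_mul (myC s2 ^ d)) (myF_aesm hmeas y)
  refine ae_of_all _ fun z => ?_
  rw [Real.norm_of_nonneg (myF_nonneg hs2 hnn y z)]
  exact myF_le hs2 hnn y z

lemma myF_mul_integrable {d : ℕ} {a s2 : ℝ} (hs2 : 0 < s2) {p : (Fin d → ℝ) → ℝ}
    (hmeas : Measurable p) (hnn : ∀ z, 0 ≤ p z) (hint1 : (∫ z, p z) = 1)
    {R : ℝ} (hR : ∀ z, p z ≠ 0 → ‖z‖ ≤ R)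
    (y : Fin d → ℝ) (j : Fin d) : Integrable (fun z => myF a s2 p y z * z j) := by
  apply Integrable.mono' ((p_integrable hint1).const_mul (myC s2 ^ d * R))
  · apply AEStronglyMeasurable.mul (myF_aesm hmeas y)
    exact (continuous_apply j).aestronglyMeasurable
  · refine ae_of_all _ fun z => ?_
    by_cases hz : p z = 0
    · simp [myF, hz]
    · have hzR : ‖z‖ ≤ R := hR z hz
      have hj : |z j| ≤ R := le_trans (norm_le_pi_norm z j) hzR
      rw [norm_mul, Real.norm_of_nonneg (myF_nonneg hs2 hnn y z)]
      calc myF a s2 p y z * ‖z j‖ ≤ (myC s2 ^ d * p z) * R := by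
            apply mul_le_mul (myF_le hs2 hnn y z) hj (abs_nonneg _)
            have := myC_pos hs2
            exact mul_nonneg (by positivity) (hnn z)
        _ = myC s2 ^ d * R * p z := by ring

lemma myF_smul_integrable {d : ℕ} {a s2 : ℝ} (hs2 : 0 < s2) {p : (Fin d → ℝ) → ℝ}
    (hmeas : Measurable p) (hnn : ∀ z, 0 ≤ p z) (hint1 : (∫ z, p z) = 1)
    {R : ℝ} (hR : ∀ z, p z ≠ 0 → ‖z‖ ≤ R)
    (y : Fin d → ℝ) : Integrable (fun z => myF a s2 p y z • z) := by
  apply Integrable.mono' ((p_integrable hint1).const_mul (myC s2 ^ d * R))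
  · apply AEStronglyMeasurable.smul (myF_aesm hmeas y) aestronglyMeasurable_id
  · refine ae_of_all _ fun z => ?_
    by_cases hz : p z = 0
    · simp [myF, hz]
    · have hzR : ‖z‖ ≤ R := hR z hz
      rw [norm_smul, Real.norm_of_nonneg (myF_nonneg hs2 hnn y z)]
      calc myF a s2 p y z * ‖z‖ ≤ (myC s2 ^ d * p z) * R := by
            apply mul_le_mul (myF_le hs2 hnn y z) hzR (norm_nonneg _)
            have := myC_pos hs2
            exact mul_nonneg (by positivity) (hnn z)
        _ = myC s2 ^ d * R * p z := by ring

lemma myF_lower {d : ℕ} {a s2 : ℝ} (hs2 : 0 < s2) {p : (Fin d → ℝ) → ℝ}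
    (hnn : ∀ z, 0 ≤ p z) {R : ℝ} (hR : ∀ z, p z ≠ 0 → ‖z‖ ≤ R)
    (x : Fin d → ℝ) (z : Fin d → ℝ) :
    myC s2 ^ d * Real.exp (-(d * ((‖x‖ + |a| * R)^2 / (2*s2)))) * p z ≤ myF a s2 p x z := by
  by_cases hz : p z = 0
  · simp [myF, hz]
  · unfold myF
    apply mul_le_mul_of_nonneg_right _ (hnn z)
    apply mul_le_mul_of_nonneg_left _ (by have := myC_pos hs2; positivity)
    apply Real.exp_le_exp.2
    have hzR := hR z hz
    have key : ∀ j, -((‖x‖ + |a| * R)^2 / (2*s2)) ≤ -((x j - a * z j)^2/(2*s2)) := by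
      intro j
      rw [neg_le_neg_iff]
      have habs : |x j - a * z j| ≤ ‖x‖ + |a| * R := by
        calc |x j - a * z j| ≤ |x j| + |a * z j| := abs_sub _ _
          _ ≤ ‖x‖ + |a| * R := by
              apply add_le_add (norm_le_pi_norm x j)
              rw [abs_mul]
              apply mul_le_mul_of_nonneg_left _ (abs_nonneg a)
              exact le_trans (norm_le_pi_norm z j) (hR z hz)
      have hsq : (x j - a * z j)^2 ≤ (‖x‖ + |a| * R)^2 := by
        rw [← sq_abs (x j - a * z j)]
        apply pow_le_pow_left₀ (abs_nonneg _) habs 2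
      exact div_le_div_of_nonneg_right hsq (by linarith)
    calc -(d * ((‖x‖ + |a| * R)^2 / (2*s2)))
        = ∑ _j : Fin d, -((‖x‖ + |a| * R)^2 / (2*s2)) := by
          simp [Finset.sum_const, Finset.card_univ, nsmul_eq_mul]
      _ ≤ ∑ j, -((x j - a * z j)^2/(2*s2)) := Finset.sum_le_sum fun j _ => key j

lemma myF_integral_pos {d : ℕ} {a s2 : ℝ} (hs2 : 0 < s2) {p : (Fin d → ℝ) → ℝ}
    (hmeas : Measurable p) (hnn : ∀ z, 0 ≤ p z) (hint1 : (∫ z, p z) = 1)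
    {R : ℝ} (hR : ∀ z, p z ≠ 0 → ‖z‖ ≤ R) (x : Fin d → ℝ) :
    0 < ∫ z, myF a s2 p x z := by
  have hc := myC_pos hs2
  have key : myC s2 ^ d * Real.exp (-(d * ((‖x‖ + |a| * R)^2 / (2*s2))))
      ≤ ∫ z, myF a s2 p x z := by
    have h1 : (∫ z, myC s2 ^ d * Real.exp (-(d * ((‖x‖ + |a| * R)^2 / (2*s2)))) * p z)
        ≤ ∫ z, myF a s2 p x z := by
      apply integral_mono _ (myF_integrable hs2 hmeas hnn hint1 x)
      · exact fun z => myF_lower hs2 hnn hR x z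
      · exact (p_integrable hint1).const_mul _
    rw [integral_const_mul, hint1, mul_one] at h1
    exact h1
  calc (0:ℝ) < myC s2 ^ d * Real.exp (-(d * ((‖x‖ + |a| * R)^2 / (2*s2)))) := by positivity
    _ ≤ _ := key

lemma myW_cont {d : ℕ} (a s2 : ℝ) (y : Fin d → ℝ) :
    Continuous (fun z => myW a s2 y z) := by
  unfold myW
  apply continuous_finset_sum
  intro i _
  exact Continuous.smul (f := fun z : Fin d → ℝ => -((y i - a * z i)/s2)) (by fun_prop) continuous_const

lemma myW_norm_le {d : ℕ} {a s2 : ℝ} (hs2 : 0 < s2) (y z : Fin d → ℝ) :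
    ‖myW a s2 y z‖ ≤ ∑ i, |y i - a * z i| / s2 := by
  apply ContinuousLinearMap.opNorm_le_bound
  · apply Finset.sum_nonneg
    intro i _
    positivity
  · intro v
    have hval : myW a s2 y z v = ∑ i, -((y i - a * z i)/s2) * v i := by
      unfold myW
      rw [ContinuousLinearMap.sum_apply]
      apply Finset.sum_congr rfl
      intro i _
      rfl
    rw [hval, Real.norm_eq_abs]
    calc |∑ i, -((y i - a * z i)/s2) * v i|
        ≤ ∑ i, |(-((y i - a * z i)/s2)) * v i| := Finset.abs_sum_le_sum_abs _ _
      _ ≤ ∑ i, |y i - a * z i| / s2 * ‖v‖ := by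
          apply Finset.sum_le_sum
          intro i _
          rw [abs_mul, abs_neg, abs_div, abs_of_pos hs2]
          apply mul_le_mul_of_nonneg_left _ (by positivity)
          exact le_trans (le_of_eq (Real.norm_eq_abs _).symm) (norm_le_pi_norm v i)
      _ = (∑ i, |y i - a * z i| / s2) * ‖v‖ := by rw [Finset.sum_mul]

lemma myW_apply_single {d : ℕ} (a s2 : ℝ) (y z : Fin d → ℝ) (j : Fin d) :
    myW a s2 y z (Pi.single j 1) = -((y j - a * z j)/s2) := by
  unfold myW
  rw [ContinuousLinearMap.sum_apply]
  rw [Finset.sum_eq_single j]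
  · simp
  · intro i _ hij
    simp [Pi.single_apply, hij]
  · simp

lemma myF_hasFDerivAt {d : ℕ} {a s2 : ℝ} (hs2 : 0 < s2) (p : (Fin d → ℝ) → ℝ)
    (z : Fin d → ℝ) (y : Fin d → ℝ) :
    HasFDerivAt (fun y => myF a s2 p y z) (myF a s2 p y z • myW a s2 y z) y := by
  have hq : HasFDerivAt (fun y : Fin d → ℝ => ∑ j, -((y j - a * z j)^2/(2*s2)))
      (myW a s2 y z) y := by
    unfold myW
    apply HasFDerivAt.fun_sum
    intro i _
    have h1 : HasDerivAt (fun u : ℝ => -((u - a * z i)^2/(2*s2)))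
        (-((y i - a * z i)/s2)) (y i) := by
      have h2 := (((hasDerivAt_id (y i)).sub_const (a * z i)).pow 2).div_const (2*s2)
      have h3 := h2.neg
      convert h3 using 1
      · ext u; simp
      · rfl
      · ext u; simp
      show -((y i - a * z i) / s2) = -(((2:ℕ):ℝ) * (y i - a * z i) ^ (2 - 1) * 1 / (2 * s2))
      norm_num
      field_simp
    have h5 : HasFDerivAt (fun y : Fin d → ℝ => y i)
        (ContinuousLinearMap.proj i : (Fin d → ℝ) →L[ℝ] ℝ) y :=
      (ContinuousLinearMap.proj i : (Fin d → ℝ) →L[ℝ] ℝ).hasFDerivAt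
    have := h1.comp_hasFDerivAt y h5; exact this
  have hexp := hq.exp
  have h4 := (hexp.const_mul (myC s2 ^ d)).mul_const (p z)
  refine h4.congr_fderiv ?_
  rw [smul_smul, smul_smul]
  congr 1
  unfold myF
  ring

lemma myFW_norm_bound {d : ℕ} {a s2 : ℝ} (hs2 : 0 < s2) {p : (Fin d → ℝ) → ℝ}
    (hnn : ∀ z, 0 ≤ p z) {R : ℝ} (hR : ∀ z, p z ≠ 0 → ‖z‖ ≤ R)
    (x : Fin d → ℝ) :
    ∀ z, ∀ y ∈ Metric.ball x 1,
      ‖myF a s2 p y z • myW a s2 y z‖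
        ≤ myC s2 ^ d * (d * ((‖x‖ + 1 + |a| * R)/s2)) * p z := by
  intro z y hy
  by_cases hz : p z = 0
  · simp [myF, hz]
  · have hzR := hR z hz
    have hynorm : ‖y‖ ≤ ‖x‖ + 1 := by
      have := mem_ball_iff_norm.1 hy
      calc ‖y‖ = ‖x + (y - x)‖ := by ring_nf
        _ ≤ ‖x‖ + ‖y - x‖ := norm_add_le _ _
        _ ≤ ‖x‖ + 1 := by linarith
    rw [norm_smul (myF a s2 p y z) (myW a s2 y z),
      Real.norm_of_nonneg (myF_nonneg hs2 hnn y z)]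
    have hW : ‖myW a s2 y z‖ ≤ d * ((‖x‖ + 1 + |a| * R)/s2) := by
      apply le_trans (myW_norm_le hs2 y z)
      calc ∑ i, |y i - a * z i| / s2
          ≤ ∑ _i : Fin d, (‖x‖ + 1 + |a| * R)/s2 := by
            apply Finset.sum_le_sum
            intro i _
            have hnum : |y i - a * z i| ≤ ‖x‖ + 1 + |a| * R := by
              calc |y i - a * z i| ≤ |y i| + |a * z i| := abs_sub _ _
              _ ≤ (‖x‖ + 1) + |a| * R := by
                  apply add_le_add (le_trans (norm_le_pi_norm y i) hynorm)
                  rw [abs_mul]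
                  exact mul_le_mul_of_nonneg_left
                    (le_trans (norm_le_pi_norm z i) hzR) (abs_nonneg a)
              _ = ‖x‖ + 1 + |a| * R := by ring
            exact div_le_div_of_nonneg_right hnum (by linarith)
        _ = d * ((‖x‖ + 1 + |a| * R)/s2) := by
            simp [Finset.sum_const, Finset.card_univ, nsmul_eq_mul]
    calc myF a s2 p y z * ‖myW a s2 y z‖
        ≤ (myC s2 ^ d * p z) * (d * ((‖x‖ + 1 + |a| * R)/s2)) := by
          apply mul_le_mul (myF_le hs2 hnn y z) hW (norm_nonneg _)
          exact mul_nonneg (le_of_lt (by have := myC_pos hs2; positivity)) (hnn z)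
      _ = myC s2 ^ d * (d * ((‖x‖ + 1 + |a| * R)/s2)) * p z := by ring

lemma myFW_aesm {d : ℕ} {a s2 : ℝ} {p : (Fin d → ℝ) → ℝ} (hmeas : Measurable p)
    (x : Fin d → ℝ) :
    AEStronglyMeasurable (fun z => myF a s2 p x z • myW a s2 x z)
      (volume : Measure (Fin d → ℝ)) :=
  (myF_aesm hmeas x).smul (myW_cont a s2 x).aestronglyMeasurable

lemma myFW_integrable {d : ℕ} {a s2 : ℝ} (hs2 : 0 < s2) {p : (Fin d → ℝ) → ℝ}
    (hmeas : Measurable p) (hnn : ∀ z, 0 ≤ p z) (hint1 : (∫ z, p z) = 1)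
    {R : ℝ} (hR : ∀ z, p z ≠ 0 → ‖z‖ ≤ R) (x : Fin d → ℝ) :
    Integrable (fun z => myF a s2 p x z • myW a s2 x z) := by
  apply Integrable.mono'
    ((p_integrable hint1).const_mul (myC s2 ^ d * (d * ((‖x‖ + 1 + |a| * R)/s2))))
    (myFW_aesm hmeas x)
  exact ae_of_all _ fun z =>
    myFW_norm_bound hs2 hnn hR x z x (Metric.mem_ball_self one_pos)

lemma marg_hasFDerivAt {d : ℕ} {a s2 : ℝ} (hs2 : 0 < s2) {p : (Fin d → ℝ) → ℝ}
    (hmeas : Measurable p) (hnn : ∀ z, 0 ≤ p z) (hint1 : (∫ z, p z) = 1)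
    {R : ℝ} (hR : ∀ z, p z ≠ 0 → ‖z‖ ≤ R) (x : Fin d → ℝ) :
    HasFDerivAt (fun y => ∫ z, myF a s2 p y z)
      (∫ z, myF a s2 p x z • myW a s2 x z) x := by
  apply hasFDerivAt_integral_of_dominated_of_fderiv_le
    (F' := fun y z => myF a s2 p y z • myW a s2 y z)
    (bound := fun z => myC s2 ^ d * (d * ((‖x‖ + 1 + |a| * R)/s2)) * p z)
    (Metric.ball_mem_nhds x one_pos)
  · exact Filter.Eventually.of_forall fun y => myF_aesm hmeas y
  · exact myF_integrable hs2 hmeas hnn hint1 x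
  · exact myFW_aesm hmeas x
  · exact ae_of_all _ fun z y hy => myFW_norm_bound hs2 hnn hR x z y hy
  · exact ((p_integrable hint1).const_mul _)
  · exact ae_of_all _ fun z y _ => myF_hasFDerivAt hs2 p z y

lemma score_eq {d : ℕ} {a s2 : ℝ} (hs2 : 0 < s2) {p : (Fin d → ℝ) → ℝ}
    (hmeas : Measurable p) (hnn : ∀ z, 0 ≤ p z) (hint1 : (∫ z, p z) = 1)
    {R : ℝ} (hR : ∀ z, p z ≠ 0 → ‖z‖ ≤ R) (x : Fin d → ℝ) (j : Fin d) :
    fderiv ℝ (fun y => Real.log (∫ z, myF a s2 p y z)) x (Pi.single j 1)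
      = (a * ((∫ z, myF a s2 p x z * z j) / (∫ z, myF a s2 p x z)) - x j) / s2 := by
  set m := ∫ z, myF a s2 p x z with hm_def
  have hm : 0 < m := myF_integral_pos hs2 hmeas hnn hint1 hR x
  have hHas := marg_hasFDerivAt (a := a) hs2 hmeas hnn hint1 hR x
  have hlog := hHas.log hm.ne'
  rw [hlog.fderiv]
  rw [ContinuousLinearMap.smul_apply]
  rw [ContinuousLinearMap.integral_apply (myFW_integrable hs2 hmeas hnn hint1 hR x)]
  have hpt : (fun z => (myF a s2 p x z • myW a s2 x z) (Pi.single j 1))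
      = fun z => (a/s2) * (myF a s2 p x z * z j) - (x j/s2) * myF a s2 p x z := by
    funext z
    rw [ContinuousLinearMap.smul_apply, myW_apply_single]
    simp only [smul_eq_mul]
    field_simp
    ring
  rw [hpt]
  rw [integral_sub ((myF_mul_integrable hs2 hmeas hnn hint1 hR x j).const_mul _)
    ((myF_integrable hs2 hmeas hnn hint1 x).const_mul _)]
  rw [integral_const_mul, integral_const_mul, ← hm_def]
  rw [smul_eq_mul]
  field_simp

theorem stmt10 {d : ℕ} (α σ : ℝ → ℝ) (hsch : IsScheduler α σ)
    (t : ℝ) (ht : t ∈ Set.Ioo (0:ℝ) 1)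
    (p : (Fin d → ℝ) → ℝ) (hp : IsProbDensity p) (hps : HasCompactSupport p)
    (u : (Fin d → ℝ) → (Fin d → ℝ))
    (hu : u = fun x => (deriv σ t / σ t) • x
      + (deriv α t - α t * deriv σ t / σ t) • denoiser α σ p t x) :
    ∀ x : Fin d → ℝ,
      u x = (deriv α t / α t) • x
        + ((deriv α t / α t) * (σ t)^2 - deriv σ t * σ t) •
            (fun j => fderiv ℝ (fun y => Real.log (marginal α σ p t y)) x (Pi.single j 1)) := by
  intro x
  obtain ⟨ht0, ht1⟩ := ht
  have ha : 0 < α t := by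
    have := hsch.mono_a (Set.mem_Icc.2 ⟨le_refl 0, zero_le_one⟩)
      (Set.mem_Icc.2 ⟨ht0.le, ht1.le⟩) ht0
    rwa [hsch.a0] at this
  have hs : 0 < σ t := by
    have := hsch.anti_s (Set.mem_Icc.2 ⟨ht0.le, ht1.le⟩)
      (Set.mem_Icc.2 ⟨zero_le_one, le_refl 1⟩) ht1
    rwa [hsch.s1] at this
  have hs2 : 0 < (σ t)^2 := by positivity
  obtain ⟨hmeas, hnn, hint1⟩ := hp
  obtain ⟨R, hRsub⟩ := hps.isBounded.subset_closedBall 0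
  have hR : ∀ z, p z ≠ 0 → ‖z‖ ≤ R := by
    intro z hz
    have hz2 : z ∈ tsupport p := subset_tsupport p hz
    have := hRsub hz2
    simpa [Metric.mem_closedBall, dist_zero_right] using this
  have hmarg : marginal α σ p t = fun y => ∫ z, myF (α t) ((σ t)^2) p y z := by
    funext y
    unfold marginal myF
    congr 1
    funext z
    simp only [gauss1]
    rw [prod_gauss]
  set m := marginal α σ p t x with hm_def
  have hmF : m = ∫ z, myF (α t) ((σ t)^2) p x z := by rw [hm_def, hmarg]
  have hm_pos : 0 < m := by
    rw [hmF]; exact myF_integral_pos hs2 hmeas hnn hint1 hR x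
  have hden : ∀ j, denoiser α σ p t x j
      = (∫ z, myF (α t) ((σ t)^2) p x z * z j) / m := by
    intro j
    have hpost : (fun z => post α σ p t z x • z)
        = fun z => m⁻¹ • (myF (α t) ((σ t)^2) p x z • z) := by
      funext z
      unfold post
      rw [smul_smul]
      congr 1
      rw [← hm_def]
      rw [div_eq_mul_inv, mul_comm]
      congr 1
      unfold myF
      simp only [gauss1]
      rw [prod_gauss]
    unfold denoiser
    rw [hpost, integral_smul]
    have hInt := myF_smul_integrable (a := α t) hs2 hmeas hnn hint1 hR x
    have hproj := (ContinuousLinearMap.proj (R := ℝ)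
      (φ := fun _ : Fin d => ℝ) j).integral_comp_comm hInt
    have hcomp : (∫ z, myF (α t) ((σ t)^2) p x z • z) j
        = ∫ z, myF (α t) ((σ t)^2) p x z * z j := by
      have h0 : (∫ z, myF (α t) ((σ t)^2) p x z • z) j
          = (ContinuousLinearMap.proj (R := ℝ) (φ := fun _ : Fin d => ℝ) j)
              (∫ z, myF (α t) ((σ t)^2) p x z • z) := rfl
      rw [h0, ← hproj]
      rfl
    rw [Pi.smul_apply, hcomp]
    rw [smul_eq_mul, div_eq_inv_mul]
  have hscore : ∀ j, fderiv ℝ (fun y => Real.log (marginal α σ p t y)) x (Pi.single j 1)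
      = (α t * (denoiser α σ p t x j) - x j) / (σ t)^2 := by
    intro j
    rw [hmarg]
    rw [score_eq hs2 hmeas hnn hint1 hR x j]
    rw [hden j, ← hmF]
  funext j
  rw [hu]
  simp only [Pi.add_apply, Pi.smul_apply, smul_eq_mul, hscore j]
  set D := denoiser α σ p t x j
  field_simp
  ring
end

section
/- Let a_t, a_{t'} ∈ (0,1) (the DDIM marginal parameters α_t^D, α_{t'}^D) and let σ^D ≥ 0 satisfy (σ^D)² < 1 − a_{t'}. Set α_t = √(a_t), σ_t = √(1 − a_t), α_{t'} = √(a_{t'}), σ_{t'} = √(1 − a_{t'}), and ρ = √(1 − (σ^D)²/(1 − a_{t'})), and define γ̄ = ρσ_{t'}/σ_t, ᾱ = α_{t'} − γ̄α_t, σ̄² = σ_{t'}²(1 − ρ²). Then ρ ∈ (0, 1], γ̄ = √((1 − a_{t'} − (σ^D)²)/(1 − a_t)), σ̄² = (σ^D)², and for all z, x ∈ ℝ: ᾱz + γ̄x = √(a_{t'})·z + √(1 − a_{t'} − (σ^D)²)·(x − √(a_t)·z)/√(1 − a_t). Hence the GLASS conditional kernel N(·; ᾱz + γ̄x, σ̄²)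 coincides with the DDIM transition kernel N(·; √(a_{t'})z + √(1 − a_{t'} − (σ^D)²)(x − √(a_t)z)/√(1 − a_t), (σ^D)²). -/
open MeasureTheory Real Matrix
open scoped BigOperators

theorem stmt14 (aT aT' : ℝ) (haT : aT ∈ Set.Ioo (0:ℝ) 1) (haT' : aT' ∈ Set.Ioo (0:ℝ) 1)
    (σD : ℝ) (hσD : 0 ≤ σD) (hσD2 : σD^2 < 1 - aT')
    (αt σt αt' σt' ρ γb αb σbsq : ℝ)
    (h1 : αt = Real.sqrt aT) (h2 : σt = Real.sqrt (1 - aT))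
    (h3 : αt' = Real.sqrt aT') (h4 : σt' = Real.sqrt (1 - aT'))
    (h5 : ρ = Real.sqrt (1 - σD^2 / (1 - aT')))
    (h6 : γb = ρ * σt' / σt) (h7 : αb = αt' - γb * αt)
    (h8 : σbsq = σt'^2 * (1 - ρ^2)) :
    ρ ∈ Set.Ioc (0:ℝ) 1 ∧
    γb = Real.sqrt ((1 - aT' - σD^2) / (1 - aT)) ∧
    σbsq = σD^2 ∧
    (∀ z x : ℝ, αb * z + γb * x
      = Real.sqrt aT' * z
        + Real.sqrt (1 - aT' - σD^2) * (x - Real.sqrt aT * z) / Real.sqrt (1 - aT)) ∧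
    (∀ y z x : ℝ, gauss1 y (αb * z + γb * x) σbsq
      = gauss1 y (Real.sqrt aT' * z
          + Real.sqrt (1 - aT' - σD^2) * (x - Real.sqrt aT * z) / Real.sqrt (1 - aT))
          (σD^2)) := by
  obtain ⟨haT0, haT1⟩ := haT
  obtain ⟨haT'0, haT'1⟩ := haT'
  have h1a : (0:ℝ) < 1 - aT := by linarith
  have h1a' : (0:ℝ) < 1 - aT' := by linarith
  have hσ2 : (0:ℝ) ≤ σD^2 := sq_nonneg _
  have hsub : (0:ℝ) < 1 - aT' - σD^2 := by linarith
  have hρarg : 1 - σD^2 / (1 - aT') = (1 - aT' - σD^2) / (1 - aT') := by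
    field_simp
  have hρpos : 0 < ρ := by
    rw [h5, hρarg]; exact Real.sqrt_pos.mpr (div_pos hsub h1a')
  have hρle : ρ ≤ 1 := by
    rw [h5]
    calc Real.sqrt (1 - σD^2 / (1 - aT')) ≤ Real.sqrt 1 := by
          apply Real.sqrt_le_sqrt
          have : 0 ≤ σD^2 / (1 - aT') := div_nonneg hσ2 h1a'.le
          linarith
      _ = 1 := Real.sqrt_one
  have hρsq : ρ^2 = 1 - σD^2 / (1 - aT') := by
    rw [h5, Real.sq_sqrt]
    rw [hρarg]; exact (div_nonneg hsub.le h1a'.le)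
  have hσtpos : 0 < σt := by rw [h2]; exact Real.sqrt_pos.mpr h1a
  have hσt'sq : σt'^2 = 1 - aT' := by rw [h4, Real.sq_sqrt h1a'.le]
  have hσtsq : σt^2 = 1 - aT := by rw [h2, Real.sq_sqrt h1a.le]
  have hγ : γb = Real.sqrt ((1 - aT' - σD^2) / (1 - aT)) := by
    rw [h6, h5, hρarg, h4, h2, ← Real.sqrt_mul (div_nonneg hsub.le h1a'.le),
      ← Real.sqrt_div' _ (by positivity : (0:ℝ) ≤ _)]
    congr 1
    field_simp
  have hσb : σbsq = σD^2 := by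
    rw [h8, hσt'sq, hρsq]
    field_simp
    ring
  have hγ2 : γb = Real.sqrt (1 - aT' - σD^2) / Real.sqrt (1 - aT) := by
    rw [hγ, Real.sqrt_div hsub.le]
  have hmean : ∀ z x : ℝ, αb * z + γb * x
      = Real.sqrt aT' * z
        + Real.sqrt (1 - aT' - σD^2) * (x - Real.sqrt aT * z) / Real.sqrt (1 - aT) := by
    intro z x
    have hs : Real.sqrt (1 - aT) ≠ 0 := by positivity
    rw [h7, h3, h1, hγ2]
    field_simp
    ring
  refine ⟨⟨hρpos, hρle⟩, hγ, hσb, hmean, ?_⟩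
  intro y z x
  rw [hmean, hσb]
end
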